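/- arXiv:2204.00406 — 6 statements merged into one kernel-verified Lean document; each statement's English description precedes it below -/
import Mathlib

section
/- Let h : ℝ^n → ℝ be strongly convex and twice continuously differentiable, and for each x ∈ ℝ^n let z*(x) denote the unique maximizer of z ↦ ⟨x,z⟩ − h(z). Then the convex conjugate h* : ℝ^n → ℝ is twice continuously differentiable and for all x ∈ ℝ^n: h*(x) = ⟨x, z*(x)⟩ − h(z*(x)), ∇h*(x) = z*(x), and ∇²h*(x) = [∇²h(z*(x))]^{-1}. -/
/-! Strong convexity makes `∇h` strongly monotone: `μ ‖x - y‖² ≤ ⟪∇h x - ∇h y, x - y⟫`. Hence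
`∇h` is injective with a Lipschitz right inverse, which is `z*` by the first-order condition
`∇h (z* x) = x`, and its derivative `∇²h` is coercive, hence invertible, everywhere. The easy half
of the inverse function theorem then makes `z*` a `C¹` map with derivative `(∇²h (z* x))⁻¹`, and
the envelope theorem applied to `h* x = ⟪x, z* x⟫ - h (z* x)` gives `∇h* = z*`. -/

open scoped RealInnerProductSpace

noncomputable def conjFull {n : ℕ} (h : EuclideanSpace ℝ (Fin n) → ℝ) :
    EuclideanSpace ℝ (Fin n) → ℝ :=
  fun x => sSup (Set.range fun z => ⟪x, z⟫ - h z)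

open Set Filter Topology InnerProductSpace

variable {E : Type*} [NormedAddCommGroup E] [InnerProductSpace ℝ E]

section Gradient

variable [CompleteSpace E] {f : E → ℝ} {x y g : E}

theorem contDiff_succ_iff_gradient {n : ℕ∞} :
    ContDiff ℝ (n + 1) f ↔ Differentiable ℝ f ∧ ContDiff ℝ n (gradient f) := by
  rw [contDiff_succ_iff_fderiv, ← toDual_comp_gradient]
  refine and_congr_right fun _ => ?_
  simpa using (toDual ℝ E).toContinuousLinearEquiv.comp_contDiff_iff (n := n) (f := gradient f)

theorem ConvexOn.inner_le_sub_of_hasGradientAt {s : Set E} (hf : ConvexOn ℝ s f) (hx : x ∈ s)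
    (hy : y ∈ s) (hg : HasGradientAt f g x) : ⟪g, y - x⟫ ≤ f y - f x := by
  have hline : HasDerivAt (f ∘ (AffineMap.lineMap x y : ℝ → E)) ⟪g, y - x⟫ 0 := by
    rw [hasGradientAt_iff_hasFDerivAt, ← AffineMap.lineMap_apply_zero (k := ℝ) x y] at hg
    simpa using hg.comp_hasDerivAt (0 : ℝ) AffineMap.hasDerivAt_lineMap
  simpa [slope_def_field] using (hf.comp_affineMap (AffineMap.lineMap x y)).le_slope_of_hasDerivAt
    (by simpa using hx) (by simpa using hy) zero_lt_one hline

theorem StrongConvexOn.inner_add_le_sub_of_hasGradientAt {s : Set E} {μ : ℝ}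
    (hf : StrongConvexOn s μ f) (hx : x ∈ s) (hy : y ∈ s) (hg : HasGradientAt f g x) :
    ⟪g, y - x⟫ + μ / 2 * ‖y - x‖ ^ 2 ≤ f y - f x := by
  have hshift : HasGradientAt (fun z => f z - μ / 2 * ‖z‖ ^ 2) (g - μ • x) x := by
    rw [hasGradientAt_iff_hasFDerivAt] at hg ⊢
    refine (hg.sub ((hasStrictFDerivAt_norm_sq x).hasFDerivAt.const_mul (μ / 2))).congr_fderiv ?_
    ext v
    simp only [sub_apply, toDual_apply_apply, smul_apply,
      coe_innerSL_apply, nsmul_eq_mul, Nat.cast_ofNat, smul_eq_mul, map_sub, map_smul]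
    ring
  have := (strongConvexOn_iff_convex.mp hf).inner_le_sub_of_hasGradientAt hx hy hshift
  simp only [inner_sub_left, inner_sub_right, real_inner_smul_left,
    real_inner_self_eq_norm_sq] at this
  rw [inner_sub_right, norm_sub_sq_real, real_inner_comm x y]
  linarith

end Gradient

def IsStronglyMonotone (μ : ℝ) (g : E → E) : Prop :=
  ∀ x y, μ * ‖x - y‖ ^ 2 ≤ ⟪g x - g y, x - y⟫

theorem StrongConvexOn.isStronglyMonotone [CompleteSpace E] {f : E → ℝ} {μ : ℝ}
    (hf : StrongConvexOn univ μ f) {g : E → E} (hg : ∀ x, HasGradientAt f (g x) x) :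
    IsStronglyMonotone μ g := by
  intro x y
  have hxy := hf.inner_add_le_sub_of_hasGradientAt (mem_univ x) (mem_univ y) (hg x)
  have hyx := hf.inner_add_le_sub_of_hasGradientAt (mem_univ y) (mem_univ x) (hg y)
  rw [norm_sub_rev y x, ← neg_sub x y, inner_neg_right] at hxy
  rw [inner_sub_left]
  linarith

namespace IsStronglyMonotone

variable {μ : ℝ} {g k : E → E}

theorem mul_norm_sub_le (hg : IsStronglyMonotone μ g) (x y : E) :
    μ * ‖x - y‖ ≤ ‖g x - g y‖ := by
  rcases (norm_nonneg (x - y)).eq_or_lt with h0 | hpos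
  · rw [← h0, mul_zero]
    exact norm_nonneg _
  · refine le_of_mul_le_mul_right ?_ hpos
    calc μ * ‖x - y‖ * ‖x - y‖ = μ * ‖x - y‖ ^ 2 := by ring
      _ ≤ ⟪g x - g y, x - y⟫ := hg x y
      _ ≤ ‖g x - g y‖ * ‖x - y‖ := real_inner_le_norm _ _

theorem antilipschitzWith (hg : IsStronglyMonotone μ g) (hμ : 0 < μ) :
    AntilipschitzWith (Real.toNNReal μ⁻¹) g :=
  .of_le_mul_dist fun x y => by
    rw [dist_eq_norm, dist_eq_norm, Real.coe_toNNReal _ (inv_nonneg.2 hμ.le), ← div_eq_inv_mul,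
      le_div_iff₀' hμ]
    exact hg.mul_norm_sub_le x y

theorem _root_.HasFDerivAt.isStronglyMonotone {g' : E →L[ℝ] E} {z : E} (hd : HasFDerivAt g g' z)
    (hg : IsStronglyMonotone μ g) : IsStronglyMonotone μ g' := by
  suffices key : ∀ v, μ * ‖v‖ ^ 2 ≤ ⟪g' v, v⟫ by
    intro x y
    rw [← map_sub]
    exact key (x - y)
  intro v
  have hlim : Tendsto (fun n : ℕ => ⟪(n : ℝ) • (g (z + (n : ℝ)⁻¹ • v) - g z), v⟫) atTop
      (𝓝 ⟪g' v, v⟫) :=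
    (hd.lim v (by simpa using tendsto_natCast_atTop_atTop)).inner tendsto_const_nhds
  refine ge_of_tendsto hlim (eventually_atTop.2 ⟨1, fun n hn1 => ?_⟩)
  have hn : (0 : ℝ) < n := by exact_mod_cast hn1
  have := hg (z + (n : ℝ)⁻¹ • v) z
  rw [add_sub_cancel_left, norm_smul, inner_smul_right, Real.norm_eq_abs,
    abs_of_pos (inv_pos.2 hn)] at this
  rw [real_inner_smul_left]
  calc μ * ‖v‖ ^ 2 = n ^ 2 * (μ * ((n : ℝ)⁻¹ * ‖v‖) ^ 2) := by field_simp
    _ ≤ n ^ 2 * ((n : ℝ)⁻¹ * ⟪g (z + (n : ℝ)⁻¹ • v) - g z, v⟫) := by gcongr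
    _ = n * ⟪g (z + (n : ℝ)⁻¹ • v) - g z, v⟫ := by field_simp

variable [FiniteDimensional ℝ E]

theorem exists_continuousLinearEquiv {L : E →L[ℝ] E}
    (hL : IsStronglyMonotone μ L) (hμ : 0 < μ) : ∃ e : E ≃L[ℝ] E, (e : E →L[ℝ] E) = L :=
  ⟨(LinearEquiv.ofInjectiveEndo L.toLinearMap
    (hL.antilipschitzWith hμ).injective).toContinuousLinearEquiv, rfl⟩

theorem exists_hasFDerivAt_rightInverse (hg : IsStronglyMonotone μ g) (hμ : 0 < μ)
    (hgd : Differentiable ℝ g) (hk : Function.RightInverse k g) (x : E) :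
    ∃ e : E ≃L[ℝ] E,
      (e : E →L[ℝ] E) = fderiv ℝ g (k x) ∧ HasFDerivAt k (e.symm : E →L[ℝ] E) x := by
  obtain ⟨e, he⟩ := ((hgd (k x)).hasFDerivAt.isStronglyMonotone hg).exists_continuousLinearEquiv hμ
  refine ⟨e, he, .of_local_left_inverse ?_ (he ▸ (hgd (k x)).hasFDerivAt) (.of_forall hk)⟩
  exact ((hg.antilipschitzWith hμ).to_rightInverse hk).continuous.continuousAt

theorem contDiff_rightInverse (hg : IsStronglyMonotone μ g) (hμ : 0 < μ) {n : WithTop ℕ∞}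
    (hgn : ContDiff ℝ n g) (hn : n ≠ 0) (hk : Function.RightInverse k g) : ContDiff ℝ n k := by
  have hgd := hgn.differentiable hn
  let G : E ≃ₜ E :=
    { toFun := g
      invFun := k
      left_inv := fun x => (hg.antilipschitzWith hμ).injective (hk (g x))
      right_inv := hk
      continuous_toFun := hgd.continuous
      continuous_invFun := ((hg.antilipschitzWith hμ).to_rightInverse hk).continuous }
  choose e he using fun z =>
    ((hgd z).hasFDerivAt.isStronglyMonotone hg).exists_continuousLinearEquiv hμ
  exact G.contDiff_symm (f₀' := e) (fun z => (he z).symm ▸ (hgd z).hasFDerivAt) hgn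

end IsStronglyMonotone

section Conjugate

variable [CompleteSpace E]

theorem hasGradientAt_of_isLocalMax_inner_sub {f : E → ℝ} {x z : E}
    (hmax : IsLocalMax (fun z => ⟪x, z⟫ - f z) z) (hf : DifferentiableAt ℝ f z) :
    HasGradientAt f x z := by
  have h0 := hmax.hasFDerivAt_eq_zero ((innerSL ℝ x).hasFDerivAt.sub hf.hasFDerivAt)
  have hfz : fderiv ℝ f z = toDual ℝ E x := (sub_eq_zero.mp h0).symm
  exact hasGradientAt_iff_hasFDerivAt.mpr (hfz ▸ hf.hasFDerivAt)

-- Envelope theorem: the terms carrying `k'` cancel because `∇f (k x) = x`.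
theorem HasFDerivAt.hasGradientAt_inner_sub_comp {f : E → ℝ} {k : E → E} {k' : E →L[ℝ] E}
    {x : E} (hk : HasFDerivAt k k' x) (hf : HasGradientAt f x (k x)) :
    HasGradientAt (fun y => ⟪y, k y⟫ - f (k y)) (k x) x := by
  rw [hasGradientAt_iff_hasFDerivAt] at hf ⊢
  refine (((hasFDerivAt_id x).inner ℝ hk).sub (hf.comp x hk)).congr_fderiv ?_
  ext v
  simp [fderivInnerCLM_apply, real_inner_comm]

end Conjugate

theorem conjFull_eq_of_isMaxOn {n : ℕ} {h : EuclideanSpace ℝ (Fin n) → ℝ}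
    {x z : EuclideanSpace ℝ (Fin n)} (hz : IsMaxOn (fun z => ⟪x, z⟫ - h z) univ z) :
    conjFull h x = ⟪x, z⟫ - h z :=
  IsGreatest.csSup_eq ⟨⟨z, rfl⟩, by rintro _ ⟨w, rfl⟩; exact hz (mem_univ w)⟩

/-- **Smoothness of conjugates of strongly convex `C²` functions.**
Let `h : ℝⁿ → ℝ` be strongly convex and twice continuously differentiable, and for each
`x` let `z*(x)` be the unique maximizer of `z ↦ ⟪x,z⟫ − h z`.  Then the conjugate `h*` is
twice continuously differentiable and for all `x`: `h*(x) = ⟪x, z*(x)⟫ − h (z*(x))`,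
`∇h*(x) = z*(x)`, and `∇²h*(x) = [∇²h(z*(x))]⁻¹` (the Hessians, realized as the Fréchet
derivatives of the gradient maps, are mutually inverse linear maps). -/
theorem conjugate_of_C2_strongly_convex (n : ℕ) (h : EuclideanSpace ℝ (Fin n) → ℝ)
    (hC2 : ContDiff ℝ 2 h)
    (hstrong : ∃ μ : ℝ, 0 < μ ∧ ConvexOn ℝ Set.univ (fun z => h z - μ / 2 * ‖z‖ ^ 2))
    (zstar : EuclideanSpace ℝ (Fin n) → EuclideanSpace ℝ (Fin n))
    (hzstar : ∀ x, IsMaxOn (fun z => ⟪x, z⟫ - h z) Set.univ (zstar x)) :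
    ContDiff ℝ 2 (conjFull h) ∧
    (∀ x, conjFull h x = ⟪x, zstar x⟫ - h (zstar x)) ∧
    (∀ x, HasGradientAt (conjFull h) (zstar x) x) ∧
    (∀ x,
      (fderiv ℝ (gradient (conjFull h)) x).comp (fderiv ℝ (gradient h) (zstar x)) =
        ContinuousLinearMap.id ℝ _ ∧
      (fderiv ℝ (gradient h) (zstar x)).comp (fderiv ℝ (gradient (conjFull h)) x) =
        ContinuousLinearMap.id ℝ _) := by
  obtain ⟨μ, hμ, hconv⟩ := hstrong
  obtain ⟨hhd, hgradC1⟩ := contDiff_succ_iff_gradient (n := 1).mp hC2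
  have hmono : IsStronglyMonotone μ (gradient h) :=
    (strongConvexOn_iff_convex.mpr hconv).isStronglyMonotone fun z => (hhd z).hasGradientAt
  have hfoc : ∀ x, HasGradientAt h x (zstar x) := fun x =>
    hasGradientAt_of_isLocalMax_inner_sub ((hzstar x).isLocalMax univ_mem) (hhd _)
  have hinv : Function.RightInverse zstar (gradient h) := fun x => (hfoc x).gradient
  have hderiv := hmono.exists_hasFDerivAt_rightInverse hμ (hgradC1.differentiable one_ne_zero) hinv
  have hval : ∀ x, conjFull h x = ⟪x, zstar x⟫ - h (zstar x) := fun x =>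
    conjFull_eq_of_isMaxOn (hzstar x)
  have hgrad : ∀ x, HasGradientAt (conjFull h) (zstar x) x := fun x => by
    obtain ⟨_, _, hk⟩ := hderiv x
    rw [funext hval]
    exact hk.hasGradientAt_inner_sub_comp (hfoc x)
  have hgrad_eq : gradient (conjFull h) = zstar := gradient_eq hgrad
  refine ⟨?_, hval, hgrad, fun x => ?_⟩
  · refine contDiff_succ_iff_gradient (n := 1).mpr ⟨fun x => (hgrad x).differentiableAt, ?_⟩
    rw [hgrad_eq]
    exact hmono.contDiff_rightInverse hμ hgradC1 one_ne_zero hinv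
  · obtain ⟨e, he, hk⟩ := hderiv x
    rw [hgrad_eq, hk.fderiv, ← he]
    exact ⟨e.coe_symm_comp_coe, e.coe_comp_coe_symm⟩
end

section
/- For i = 1,…,N let f_i : ℝ^{m_i} → ℝ be convex and L_i-smooth and let A_i ∈ ℝ^{m_i×n}. Let φ : ℝ^n → (−∞,∞] be proper, closed, and convex, set f(x) := (1/N)∑_{i=1}^N f_i(A_i x), ψ := f + φ, and L̄ := max_{1≤i≤N} L_i‖A_i‖². Suppose x* ∈ argmin_x ψ(x) exists. Then for all x, x̃ ∈ dom(φ), with ζ_i := A_iᵀ(∇f_i(A_i x) − ∇f_i(A_i x̃)): (1/N)∑_{i=1}^N ‖ζ_i‖² ≤ 4L̄·(ψ(x) − ψ(x*) + ψ(x̃) − ψ(x*)). -/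
/-!
A convex function with `L`-Lipschitz gradient is cocoercive in Bregman form:
`‖∇f u - ∇f v‖² ≤ 2 L D_f(v, u)` with `D_f(v, u) = f u - f v - ⟪∇f v, u - v⟫`, which follows
by squeezing `f` at the gradient step from `u` between the first-order lower bound at `v` and
the descent-lemma upper bound at `u`. Comparing both gradients in `ζ_i` with `∇f_i(A_i x*)`
bounds `‖ζ_i‖²` by `4 L_i ‖A_i‖²` times `D_i(x*, x) + D_i(x*, x̃)`. The first-order optimality
of `x*` for `f + φ` with `φ` convex says that the average over `i` of `D_i(x*, x)` is at most
`ψ x - ψ x*`.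
-/

open scoped RealInnerProductSpace

open Set

lemma nonneg_of_norm_sub_le_mul {F G : Type*} [NormedAddCommGroup F] [Nontrivial F]
    [SeminormedAddCommGroup G] {g : F → G} {L : ℝ} (hLip : ∀ y z, ‖g y - g z‖ ≤ L * ‖y - z‖) :
    0 ≤ L := by
  obtain ⟨y, hy⟩ := exists_ne (0 : F)
  have hy0 := hLip y 0
  rw [sub_zero] at hy0
  exact nonneg_of_mul_nonneg_left ((norm_nonneg _).trans hy0) (norm_pos_iff.2 hy)

lemma HasDerivAt.le_of_forall_mul_le_sub {g : ℝ → ℝ} {c d : ℝ} (hd : HasDerivAt g d 0)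
    (hs : ∀ t ∈ Ioc (0 : ℝ) 1, t * c ≤ g t - g 0) : c ≤ d := by
  refine ge_of_tendsto ((hasDerivAt_iff_tendsto_slope.mp hd).mono_left
    (nhdsWithin_mono 0 fun t (ht : t ∈ Ioi 0) => ne_of_gt ht)) ?_
  filter_upwards [Ioc_mem_nhdsGT zero_lt_one] with t ht
  rw [slope_def_field, sub_zero, le_div_iff₀ ht.1, mul_comm]
  exact hs t ht

lemma sub_le_lineDeriv_of_isMinOn_add {E : Type*} [AddCommGroup E] [Module ℝ E] {h φ : E → ℝ}
    {D : Set E} {x₀ x : E} {d : ℝ} (hφ : ConvexOn ℝ D φ)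
    (hmin : IsMinOn (fun y => h y + φ y) D x₀) (hx₀ : x₀ ∈ D) (hx : x ∈ D)
    (hd : HasLineDerivAt ℝ h d x₀ (x - x₀)) : φ x₀ - φ x ≤ d := by
  refine HasDerivAt.le_of_forall_mul_le_sub hd fun t ht => ?_
  have hseg : x₀ + t • (x - x₀) = (1 - t) • x₀ + t • x := by module
  have hconv := hφ.2 hx₀ hx (sub_nonneg.2 ht.2) ht.1.le (sub_add_cancel 1 t)
  have hle := isMinOn_iff.mp hmin _ (hφ.1 hx₀ hx (sub_nonneg.2 ht.2) ht.1.le (sub_add_cancel 1 t))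
  rw [← hseg] at hconv hle
  simp only [smul_eq_mul, zero_smul, add_zero] at hconv hle ⊢
  linarith

section Gradient

variable {E : Type*} [NormedAddCommGroup E] [InnerProductSpace ℝ E] [CompleteSpace E]
  {f : E → ℝ} {g : E → E} {L : ℝ}

def bregmanDiv (f : E → ℝ) (g : E → E) (z y : E) : ℝ := f y - f z - ⟪g z, y - z⟫

lemma HasGradientAt.hasDerivAt_comp_add_smul {f' z v : E} {t : ℝ}
    (hf : HasGradientAt f f' (z + t • v)) :
    HasDerivAt (fun s : ℝ => f (z + s • v)) ⟪f', v⟫ t := by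
  have hline : HasDerivAt (fun s : ℝ => z + s • v) v t := by
    simpa using ((hasDerivAt_id t).smul_const v).const_add z
  simpa [Function.comp_def] using hf.hasFDerivAt.comp_hasDerivAt t hline

lemma ConvexOn.add_inner_le_of_hasGradientAt {s : Set E} {f' z u : E}
    (hconv : ConvexOn ℝ s f) (hz : z ∈ s) (hu : u ∈ s) (hf : HasGradientAt f f' z) :
    f z + ⟪f', u - z⟫ ≤ f u := by
  have hderiv : HasDerivAt (fun t : ℝ => f (z + t • (u - z))) ⟪f', u - z⟫ 0 :=
    HasGradientAt.hasDerivAt_comp_add_smul (by simpa using hf)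
  have hline := (hconv.comp_affineMap (AffineMap.lineMap z u)).le_slope_of_hasDerivAt
    (by simpa using hz) (by simpa using hu) zero_lt_one
    (by simpa [Function.comp_def, AffineMap.lineMap_apply_module', add_comm] using hderiv)
  simp only [slope, sub_zero, inv_one, Function.comp_apply, AffineMap.lineMap_apply_one,
    AffineMap.lineMap_apply_zero, vsub_eq_sub, smul_eq_mul, one_mul] at hline
  linarith

lemma bregmanDiv_nonneg (hgrad : ∀ y, HasGradientAt f (g y) y) (hconv : ConvexOn ℝ univ f)
    (z y : E) : 0 ≤ bregmanDiv f g z y := by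
  have := hconv.add_inner_le_of_hasGradientAt (mem_univ z) (mem_univ y) (hgrad z)
  rw [bregmanDiv]
  linarith

omit [CompleteSpace E] in
lemma inner_sub_le_of_lipschitz (hLip : ∀ y z, ‖g y - g z‖ ≤ L * ‖y - z‖) (z v : E) {t : ℝ}
    (ht : 0 ≤ t) : ⟪g (z + t • v) - g z, v⟫ ≤ L * t * ‖v‖ ^ 2 :=
  calc ⟪g (z + t • v) - g z, v⟫ ≤ ‖g (z + t • v) - g z‖ * ‖v‖ := real_inner_le_norm _ _
    _ ≤ L * ‖(z + t • v) - z‖ * ‖v‖ := by gcongr; exact hLip _ _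
    _ = L * t * ‖v‖ ^ 2 := by
      rw [add_sub_cancel_left, norm_smul, Real.norm_of_nonneg ht]
      ring

lemma bregmanDiv_le_of_lipschitz (hgrad : ∀ y, HasGradientAt f (g y) y)
    (hLip : ∀ y z, ‖g y - g z‖ ≤ L * ‖y - z‖) (z y : E) :
    bregmanDiv f g z y ≤ L / 2 * ‖y - z‖ ^ 2 := by
  set v := y - z
  let k : ℝ → ℝ := fun t => f (z + t • v) - t * ⟪g z, v⟫ - L / 2 * ‖v‖ ^ 2 * t ^ 2
  have hk : ∀ t, HasDerivAt k (⟪g (z + t • v), v⟫ - ⟪g z, v⟫ - L / 2 * ‖v‖ ^ 2 * (2 * t)) t :=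
    fun t => by
      have hlin : HasDerivAt (fun s : ℝ => s * ⟪g z, v⟫) ⟪g z, v⟫ t := by
        simpa using (hasDerivAt_id t).mul_const ⟪g z, v⟫
      have hquad : HasDerivAt (fun s : ℝ => L / 2 * ‖v‖ ^ 2 * s ^ 2)
          (L / 2 * ‖v‖ ^ 2 * (2 * t)) t := by
        simpa using (hasDerivAt_pow 2 t).const_mul (L / 2 * ‖v‖ ^ 2)
      exact ((hgrad (z + t • v)).hasDerivAt_comp_add_smul.sub hlin).sub hquad
  have hanti : AntitoneOn k (Icc 0 1) := by
    refine antitoneOn_of_deriv_nonpos (convex_Icc 0 1)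
      (fun t _ => (hk t).continuousAt.continuousWithinAt)
      (fun t _ => (hk t).differentiableAt.differentiableWithinAt) fun t ht => ?_
    rw [interior_Icc] at ht
    have := inner_sub_le_of_lipschitz hLip z v ht.1.le
    rw [inner_sub_left] at this
    rw [(hk t).deriv]
    linarith
  have hk01 := hanti (left_mem_Icc.2 zero_le_one) (right_mem_Icc.2 zero_le_one) zero_le_one
  simp only [k, zero_smul, add_zero, one_smul, zero_mul, one_mul, sub_zero, mul_one,
    add_sub_cancel, v, ne_eq, OfNat.ofNat_ne_zero, not_false_eq_true, zero_pow, one_pow,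
    mul_zero] at hk01
  rw [bregmanDiv]
  linarith

lemma norm_sub_sq_le_bregmanDiv (hgrad : ∀ y, HasGradientAt f (g y) y)
    (hconv : ConvexOn ℝ univ f) (hLip : ∀ y z, ‖g y - g z‖ ≤ L * ‖y - z‖) (z y : E) :
    ‖g y - g z‖ ^ 2 ≤ 2 * L * bregmanDiv f g z y := by
  obtain rfl | hyz := eq_or_ne y z
  · simp [bregmanDiv]
  have : Nontrivial E := ⟨y, z, hyz⟩
  obtain rfl | hL := (nonneg_of_norm_sub_le_mul hLip).eq_or_lt
  · simpa using hLip y z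
  set d := g y - g z
  set u := y - L⁻¹ • d
  have hfirst : f z + ⟪g z, y - z⟫ - L⁻¹ * ⟪g z, d⟫ ≤ f u := by
    have h := bregmanDiv_nonneg hgrad hconv z u
    rw [bregmanDiv, show u - z = (y - z) - L⁻¹ • d by module, inner_sub_right,
      real_inner_smul_right] at h
    linarith
  have hdesc : f u ≤ f y - L⁻¹ * ⟪g y, d⟫ + L⁻¹ / 2 * ‖d‖ ^ 2 := by
    have h := bregmanDiv_le_of_lipschitz hgrad hLip y u
    rw [bregmanDiv, show u - y = -(L⁻¹ • d) by module, inner_neg_right, real_inner_smul_right,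
      norm_neg, norm_smul, Real.norm_of_nonneg (inv_nonneg.2 hL.le)] at h
    have hL2 : L / 2 * (L⁻¹ * ‖d‖) ^ 2 = L⁻¹ / 2 * ‖d‖ ^ 2 := by field_simp
    linarith
  have hd : L⁻¹ * ⟪g y, d⟫ - L⁻¹ * ⟪g z, d⟫ = L⁻¹ * ‖d‖ ^ 2 := by
    rw [← mul_sub, ← inner_sub_left, real_inner_self_eq_norm_sq]
  have hgap : L⁻¹ / 2 * ‖d‖ ^ 2 ≤ bregmanDiv f g z y := by
    rw [bregmanDiv]
    linarith
  calc ‖d‖ ^ 2 = 2 * L * (L⁻¹ / 2 * ‖d‖ ^ 2) := by field_simp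
    _ ≤ 2 * L * bregmanDiv f g z y := by gcongr

end Gradient

lemma norm_adjoint_sub_sq_le {E F : Type*} [NormedAddCommGroup E] [InnerProductSpace ℝ E]
    [CompleteSpace E] [NormedAddCommGroup F] [InnerProductSpace ℝ F] [CompleteSpace F]
    {f : F → ℝ} {g : F → F} {L : ℝ} (hgrad : ∀ y, HasGradientAt f (g y) y)
    (hconv : ConvexOn ℝ univ f) (hLip : ∀ y z, ‖g y - g z‖ ≤ L * ‖y - z‖)
    (A : E →L[ℝ] F) (c a b : F) :
    ‖A.adjoint (g a - g b)‖ ^ 2 ≤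
      4 * (L * ‖A‖ ^ 2) * (bregmanDiv f g c a + bregmanDiv f g c b) := by
  have hsplit : g a - g b = (g a - g c) - (g b - g c) := by abel
  calc ‖A.adjoint (g a - g b)‖ ^ 2 ≤ (‖A‖ * ‖g a - g b‖) ^ 2 := by
        gcongr
        simpa using A.adjoint.le_opNorm (g a - g b)
    _ ≤ ‖A‖ ^ 2 * (2 * ‖g a - g c‖ ^ 2 + 2 * ‖g b - g c‖ ^ 2) := by
        rw [mul_pow, hsplit]
        gcongr
        nlinarith [parallelogram_law_with_norm ℝ (g a - g c) (g b - g c),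
          sq_nonneg ‖(g a - g c) + (g b - g c)‖]
    _ ≤ ‖A‖ ^ 2 * (2 * (2 * L * bregmanDiv f g c a) + 2 * (2 * L * bregmanDiv f g c b)) := by
        gcongr <;> exact norm_sub_sq_le_bregmanDiv hgrad hconv hLip _ _
    _ = 4 * (L * ‖A‖ ^ 2) * (bregmanDiv f g c a + bregmanDiv f g c b) := by ring

lemma sum_bregmanDiv_le_of_isMinOn {ι E : Type*} [Fintype ι] [NormedAddCommGroup E]
    [NormedSpace ℝ E] {F : ι → Type*} [∀ i, NormedAddCommGroup (F i)]
    [∀ i, InnerProductSpace ℝ (F i)] [∀ i, CompleteSpace (F i)] (w : ℝ)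
    (A : ∀ i, E →L[ℝ] F i) (f : ∀ i, F i → ℝ) (g : ∀ i, F i → F i) {φ : E → ℝ} {D : Set E}
    {x₀ x : E} (hgrad : ∀ i, HasGradientAt (f i) (g i (A i x₀)) (A i x₀))
    (hφ : ConvexOn ℝ D φ) (hmin : IsMinOn (fun y => w * ∑ i, f i (A i y) + φ y) D x₀)
    (hx₀ : x₀ ∈ D) (hx : x ∈ D) :
    w * ∑ i, bregmanDiv (f i) (g i) (A i x₀) (A i x) ≤
      (w * ∑ i, f i (A i x) + φ x) - (w * ∑ i, f i (A i x₀) + φ x₀) := by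
  have hd : HasLineDerivAt ℝ (fun y => w * ∑ i, f i (A i y))
      (w * ∑ i, ⟪g i (A i x₀), A i x - A i x₀⟫) x₀ (x - x₀) := by
    simpa using ((HasFDerivAt.fun_sum fun i _ =>
      (hgrad i).hasFDerivAt.comp x₀ (A i).hasFDerivAt).const_mul w).hasLineDerivAt (x - x₀)
  have hopt := sub_le_lineDeriv_of_isMinOn_add hφ hmin hx₀ hx hd
  simp only [bregmanDiv, Finset.sum_sub_distrib, mul_sub]
  linarith

theorem zeta_bound_convex_general (n N : ℕ) (md : Fin N → ℕ)
    (A : ∀ i : Fin N, EuclideanSpace ℝ (Fin n) →L[ℝ] EuclideanSpace ℝ (Fin (md i)))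
    (f : ∀ i : Fin N, EuclideanSpace ℝ (Fin (md i)) → ℝ)
    (f' : ∀ i : Fin N, EuclideanSpace ℝ (Fin (md i)) → EuclideanSpace ℝ (Fin (md i)))
    (Li : Fin N → ℝ)
    (hgrad : ∀ i y, HasGradientAt (f i) (f' i y) y)
    (hLip : ∀ i y z, ‖f' i y - f' i z‖ ≤ Li i * ‖y - z‖)
    (hconv : ∀ i, ConvexOn ℝ Set.univ (f i))
    (D : Set (EuclideanSpace ℝ (Fin n))) (φ : EuclideanSpace ℝ (Fin n) → ℝ)
    (hφconv : ConvexOn ℝ D φ)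
    (xstar : EuclideanSpace ℝ (Fin n)) (hxstarD : xstar ∈ D)
    (hxstar : ∀ y ∈ D,
      (1 / (N : ℝ)) * (∑ i : Fin N, f i (A i xstar)) + φ xstar ≤
        (1 / (N : ℝ)) * (∑ i : Fin N, f i (A i y)) + φ y)
    (x xt : EuclideanSpace ℝ (Fin n)) (hx : x ∈ D) (hxt : xt ∈ D) :
    (1 / (N : ℝ)) * ∑ i : Fin N, ‖(A i).adjoint (f' i (A i x) - f' i (A i xt))‖ ^ 2 ≤
      4 * (⨆ j : Fin N, Li j * ‖A j‖ ^ 2) *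
        (((1 / (N : ℝ)) * (∑ i : Fin N, f i (A i x)) + φ x
            - ((1 / (N : ℝ)) * (∑ i : Fin N, f i (A i xstar)) + φ xstar))
          + ((1 / (N : ℝ)) * (∑ i : Fin N, f i (A i xt)) + φ xt
            - ((1 / (N : ℝ)) * (∑ i : Fin N, f i (A i xstar)) + φ xstar))) := by
  set Lbar := ⨆ j : Fin N, Li j * ‖A j‖ ^ 2
  set B : EuclideanSpace ℝ (Fin n) → Fin N → ℝ := fun y i =>
    bregmanDiv (f i) (f' i) (A i xstar) (A i y)
  have hterm_le : ∀ i, Li i * ‖A i‖ ^ 2 ≤ Lbar := le_ciSup (Set.finite_range _).bddAbove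
  have hterm_nonneg : ∀ i, 0 ≤ Li i * ‖A i‖ ^ 2 := fun i => by
    rcases subsingleton_or_nontrivial (EuclideanSpace ℝ (Fin (md i))) with _ | _
    · simp [norm_of_subsingleton (A i)]
    · exact mul_nonneg (nonneg_of_norm_sub_le_mul (hLip i)) (sq_nonneg _)
  have hzeta : ∀ i, ‖(A i).adjoint (f' i (A i x) - f' i (A i xt))‖ ^ 2 ≤
      4 * Lbar * (B x i + B xt i) := fun i => by
    refine (norm_adjoint_sub_sq_le (hgrad i) (hconv i) (hLip i) (A i) (A i xstar) _ _).trans ?_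
    refine mul_le_mul_of_nonneg_right (by linarith [hterm_le i]) (add_nonneg ?_ ?_) <;>
      exact bregmanDiv_nonneg (hgrad i) (hconv i) _ _
  have hgap : ∀ y ∈ D, (1 / (N : ℝ)) * ∑ i, B y i ≤ _ := fun y hy =>
    sum_bregmanDiv_le_of_isMinOn _ A f f' (fun i => hgrad i _) hφconv (isMinOn_iff.2 hxstar)
      hxstarD hy
  calc _ ≤ (1 / (N : ℝ)) * ∑ i, 4 * Lbar * (B x i + B xt i) := by gcongr with i; exact hzeta i
    _ = 4 * Lbar * ((1 / (N : ℝ)) * ∑ i, B x i + (1 / (N : ℝ)) * ∑ i, B xt i) := by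
      rw [← Finset.mul_sum, Finset.sum_add_distrib]
      ring
    _ ≤ _ := by
      gcongr
      · linarith [Real.iSup_nonneg hterm_nonneg]
      · exact hgap x hx
      · exact hgap xt hxt

/-- **Bound on the variance-reduction differences via function values (convex case).**
For `i = 1,…,N` let `f_i : ℝ^{m_i} → ℝ` be convex and `L_i`-smooth (gradient `f' i`) and
`A_i : ℝⁿ → ℝ^{m_i}` linear.  Let `φ` be proper, closed and convex (domain `D`, real
values `φ` on `D`, closed epigraph), set `f x := (1/N) ∑_i f_i (A_i x)`, `ψ := f + φ` (on
`D`) and `L̄ := max_i L_i ‖A_i‖²`.  Suppose `x* ∈ argmin ψ` exists.  Then for all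
`x, x̃ ∈ dom φ`, with `ζ_i := A_iᵀ(∇f_i(A_i x) − ∇f_i(A_i x̃))`:
`(1/N) ∑_i ‖ζ_i‖² ≤ 4 L̄ (ψ x − ψ x* + ψ x̃ − ψ x*)`. -/
theorem zeta_bound_convex (n N : ℕ) (hN : 0 < N) (md : Fin N → ℕ)
    (A : ∀ i : Fin N, EuclideanSpace ℝ (Fin n) →L[ℝ] EuclideanSpace ℝ (Fin (md i)))
    (f : ∀ i : Fin N, EuclideanSpace ℝ (Fin (md i)) → ℝ)
    (f' : ∀ i : Fin N, EuclideanSpace ℝ (Fin (md i)) → EuclideanSpace ℝ (Fin (md i)))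
    (Li : Fin N → ℝ)
    (hgrad : ∀ i y, HasGradientAt (f i) (f' i y) y)
    (hLip : ∀ i y z, ‖f' i y - f' i z‖ ≤ Li i * ‖y - z‖)
    (hconv : ∀ i, ConvexOn ℝ Set.univ (f i))
    (D : Set (EuclideanSpace ℝ (Fin n))) (φ : EuclideanSpace ℝ (Fin n) → ℝ)
    (hD : D.Nonempty) (hφconv : ConvexOn ℝ D φ)
    (hφclosed : IsClosed {q : EuclideanSpace ℝ (Fin n) × ℝ | q.1 ∈ D ∧ φ q.1 ≤ q.2})
    (xstar : EuclideanSpace ℝ (Fin n)) (hxstarD : xstar ∈ D)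
    (hxstar : ∀ y ∈ D,
      (1 / (N : ℝ)) * (∑ i : Fin N, f i (A i xstar)) + φ xstar ≤
        (1 / (N : ℝ)) * (∑ i : Fin N, f i (A i y)) + φ y)
    (x xt : EuclideanSpace ℝ (Fin n)) (hx : x ∈ D) (hxt : xt ∈ D) :
    (1 / (N : ℝ)) * ∑ i : Fin N, ‖(A i).adjoint (f' i (A i x) - f' i (A i xt))‖ ^ 2 ≤
      4 * (⨆ j : Fin N, Li j * ‖A j‖ ^ 2) *
        (((1 / (N : ℝ)) * (∑ i : Fin N, f i (A i x)) + φ x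
            - ((1 / (N : ℝ)) * (∑ i : Fin N, f i (A i xstar)) + φ xstar))
          + ((1 / (N : ℝ)) * (∑ i : Fin N, f i (A i xt)) + φ xt
            - ((1 / (N : ℝ)) * (∑ i : Fin N, f i (A i xstar)) + φ xstar))) :=
  zeta_bound_convex_general n N md A f f' Li hgrad hLip hconv D φ hφconv xstar hxstarD hxstar x xt
    hx hxt
end

section
/- For i = 1,…,N let f_i : ℝ^{m_i} → ℝ be L_i-smooth, let A_i ∈ ℝ^{m_i×n}, set f(x) := (1/N)∑_{i=1}^N f_i(A_i x) and L̄ := max_{1≤i≤N} L_i‖A_i‖². Fix x, x̃ ∈ ℝ^n, let κ(1),…,κ(b) be i.i.d. indices uniform on {1,…,N}, and define u := (1/b)∑_{j=1}^b A_{κ(j)}ᵀ(∇f_{κ(j)}(A_{κ(j)} x) − ∇f_{κ(j)}(A_{κ(j)} x̃)) + ∇f(x̃). Then E‖u − ∇f(x)‖² ≤ (L̄²/b)‖x − x̃‖². -/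
open scoped RealInnerProductSpace

/-! With `g i = A_iᵀ (∇f_i (A_i x) - ∇f_i (A_i x̃))` and `ḡ` their mean, the error `u - ∇f(x)` is
the average of the `b` i.i.d. centred vectors `g (κ j) - ḡ`. Distinct draws are independent, so
the cross terms vanish in expectation and `E‖u - ∇f(x)‖² = (1/(N b)) ∑ ‖g i - ḡ‖²`, which is at
most `(1/(N b)) ∑ ‖g i‖²`; finally `‖g i‖ ≤ L_i ‖A_i‖² ‖x - x̃‖ ≤ L̄ ‖x - x̃‖`. -/

/-- Expectation (mean) of a random variable on the finite uniform probability space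
`Ω = Fin b → Fin N` of `b`-tuples of i.i.d. uniform indices. -/
noncomputable def uniformExp {N b : ℕ} {V : Type*} [AddCommGroup V] [Module ℝ V]
    (X : (Fin b → Fin N) → V) : V :=
  (1 / (N : ℝ) ^ b) • ∑ ω : Fin b → Fin N, X ω

/-- The full gradient `∇f(y) = (1/N) ∑_i A_iᵀ ∇f_i(A_i y)` of
`f(y) = (1/N) ∑_i f_i (A_i y)`. -/
noncomputable def fullGrad {n N : ℕ} (md : Fin N → ℕ)
    (A : ∀ i : Fin N, EuclideanSpace ℝ (Fin n) →L[ℝ] EuclideanSpace ℝ (Fin (md i)))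
    (f' : ∀ i : Fin N, EuclideanSpace ℝ (Fin (md i)) → EuclideanSpace ℝ (Fin (md i)))
    (y : EuclideanSpace ℝ (Fin n)) : EuclideanSpace ℝ (Fin n) :=
  (1 / (N : ℝ)) • ∑ i : Fin N, (A i).adjoint (f' i (A i y))

/-- The variance-reduced (SVRG-type) gradient estimator
`u(ω) = ∇f_S(x) − ∇f_S(x̃) + ∇f(x̃)` for the sampled tuple `S = (ω 1, …, ω b)`. -/
noncomputable def vrEstimator {n N b : ℕ} (md : Fin N → ℕ)
    (A : ∀ i : Fin N, EuclideanSpace ℝ (Fin n) →L[ℝ] EuclideanSpace ℝ (Fin (md i)))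
    (f' : ∀ i : Fin N, EuclideanSpace ℝ (Fin (md i)) → EuclideanSpace ℝ (Fin (md i)))
    (x xt : EuclideanSpace ℝ (Fin n)) (ω : Fin b → Fin N) : EuclideanSpace ℝ (Fin n) :=
  (1 / (b : ℝ)) • (∑ j : Fin b,
      (A (ω j)).adjoint (f' (ω j) (A (ω j) x) - f' (ω j) (A (ω j) xt)))
    + fullGrad md A f' xt

open Finset

section Sampling

variable {ι α M : Type*} [Fintype ι] [DecidableEq ι] [Fintype α]

theorem sum_pi_apply_eq [AddCommMonoid M] (F : α → M) (j : ι) :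
    ∑ ω : ι → α, F (ω j) = Fintype.card α ^ (Fintype.card ι - 1) • ∑ a, F a := by
  rw [Fintype.sum_equiv (Equiv.funSplitAt j α) (fun ω => F (ω j)) (fun p => F p.1) fun _ => rfl,
    Fintype.sum_prod_type]
  simp only [sum_const, card_univ, ← smul_sum, Fintype.card_fun, Fintype.card_subtype_compl,
    Fintype.card_subtype_eq]

theorem sum_pi_apply_apply_eq_zero [AddCommMonoid M] {j k : ι} (hkj : k ≠ j) (G : α → α → M)
    (hG : ∀ c, ∑ a, G a c = 0) :
    ∑ ω : ι → α, G (ω j) (ω k) = 0 := by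
  rw [Fintype.sum_equiv (Equiv.funSplitAt j α) (fun ω => G (ω j) (ω k))
    (fun p => G p.1 (p.2 ⟨k, hkj⟩)) fun _ => rfl, Fintype.sum_prod_type, sum_comm]
  simp [hG]

variable {V : Type*} [NormedAddCommGroup V] [InnerProductSpace ℝ V]

theorem sum_pi_norm_sum_sq {h : α → V} (hsum : ∑ a, h a = 0) :
    ∑ ω : ι → α, ‖∑ j, h (ω j)‖ ^ 2
      = Fintype.card α ^ (Fintype.card ι - 1) * Fintype.card ι * ∑ a, ‖h a‖ ^ 2 := by
  have hdiag (j : ι) : ∑ ω : ι → α, ⟪h (ω j), h (ω j)⟫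
      = Fintype.card α ^ (Fintype.card ι - 1) * ∑ a, ‖h a‖ ^ 2 := by
    simp_rw [sum_pi_apply_eq (fun a => ⟪h a, h a⟫) j, real_inner_self_eq_norm_sq, nsmul_eq_mul,
      Nat.cast_pow]
  have hcross {j k : ι} (hkj : k ≠ j) : ∑ ω : ι → α, ⟪h (ω j), h (ω k)⟫ = 0 :=
    sum_pi_apply_apply_eq_zero hkj (fun a c => ⟪h a, h c⟫) fun c => by
      rw [← sum_inner, hsum, inner_zero_left]
  calc ∑ ω : ι → α, ‖∑ j, h (ω j)‖ ^ 2
      = ∑ j, ∑ k, ∑ ω : ι → α, ⟪h (ω j), h (ω k)⟫ := by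
        simp_rw [← real_inner_self_eq_norm_sq, sum_inner, inner_sum]
        rw [sum_comm]
        exact sum_congr rfl fun j _ => sum_comm
    _ = ∑ j : ι, Fintype.card α ^ (Fintype.card ι - 1) * ∑ a, ‖h a‖ ^ 2 := by
        refine sum_congr rfl fun j _ => ?_
        rw [sum_eq_single_of_mem j (mem_univ j) fun k _ hkj => hcross hkj, hdiag]
    _ = _ := by rw [sum_const, card_univ, nsmul_eq_mul]; ring

end Sampling

section Centering

variable {α V : Type*} [Fintype α] [NormedAddCommGroup V] [InnerProductSpace ℝ V]

theorem sum_sub_average_eq_zero (g : α → V) :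
    ∑ a, (g a - (1 / (Fintype.card α : ℝ)) • ∑ b, g b) = 0 := by
  cases isEmpty_or_nonempty α
  · simp
  · simp [sum_sub_distrib, ← Nat.cast_smul_eq_nsmul ℝ]

theorem sum_norm_sub_average_sq_le (g : α → V) :
    ∑ a, ‖g a - (1 / (Fintype.card α : ℝ)) • ∑ b, g b‖ ^ 2 ≤ ∑ a, ‖g a‖ ^ 2 := by
  cases isEmpty_or_nonempty α
  · simp
  set μ := (1 / (Fintype.card α : ℝ)) • ∑ b, g b
  have hsum : ∑ a, g a = (Fintype.card α : ℝ) • μ := by simp [μ, smul_smul]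
  have hexpand : ∑ a, ‖g a - μ‖ ^ 2 = ∑ a, ‖g a‖ ^ 2 - Fintype.card α * ‖μ‖ ^ 2 := by
    simp only [norm_sub_sq_real, sum_add_distrib, sum_sub_distrib,
      ← mul_sum, ← sum_inner, hsum, real_inner_smul_left, real_inner_self_eq_norm_sq,
      sum_const, card_univ, nsmul_eq_mul]
    ring
  rw [hexpand]
  linarith [show 0 ≤ (Fintype.card α : ℝ) * ‖μ‖ ^ 2 by positivity]

end Centering

theorem uniformExp_norm_smul_sum_sq {N b : ℕ} {V : Type*} [NormedAddCommGroup V]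
    [InnerProductSpace ℝ V] {h : Fin N → V} (hsum : ∑ i, h i = 0) :
    uniformExp (fun ω : Fin b → Fin N => ‖(1 / (b : ℝ)) • ∑ j, h (ω j)‖ ^ 2)
      = 1 / (N * b) * ∑ i, ‖h i‖ ^ 2 := by
  simp only [uniformExp, norm_smul, mul_pow, ← mul_sum, sum_pi_norm_sum_sq hsum,
    Fintype.card_fin, smul_eq_mul, Real.norm_eq_abs, sq_abs]
  rcases b with _ | b
  · simp
  rcases Nat.eq_zero_or_pos N with rfl | hN
  · simp
  · rw [Nat.add_sub_cancel, pow_succ]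
    field_simp

theorem norm_adjoint_map_sub_le {𝕜 E F : Type*} [RCLike 𝕜] [NormedAddCommGroup E]
    [InnerProductSpace 𝕜 E] [CompleteSpace E] [NormedAddCommGroup F] [InnerProductSpace 𝕜 F]
    [CompleteSpace F] (A : E →L[𝕜] F) {g : F → F} {L : ℝ}
    (hg : ∀ y z, ‖g y - g z‖ ≤ L * ‖y - z‖) (x x' : E) :
    ‖A.adjoint (g (A x) - g (A x'))‖ ≤ L * ‖A‖ ^ 2 * ‖x - x'‖ := by
  rcases subsingleton_or_nontrivial F with hF | hF
  · simp [Subsingleton.elim A 0]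
  have hL : 0 ≤ L := by
    obtain ⟨v, hv⟩ := exists_ne (0 : F)
    have := (norm_nonneg _).trans (hg v 0)
    exact nonneg_of_mul_nonneg_left this (by simpa using hv)
  calc ‖A.adjoint (g (A x) - g (A x'))‖ ≤ ‖A‖ * ‖g (A x) - g (A x')‖ := by
        simpa only [LinearIsometryEquiv.norm_map] using A.adjoint.le_opNorm (g (A x) - g (A x'))
    _ ≤ ‖A‖ * (L * ‖A (x - x')‖) := by
        rw [map_sub]; gcongr; exact hg _ _
    _ ≤ ‖A‖ * (L * (‖A‖ * ‖x - x'‖)) := by gcongr; exact A.le_opNorm _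
    _ = L * ‖A‖ ^ 2 * ‖x - x'‖ := by ring

section Estimator

variable {n N b : ℕ} (md : Fin N → ℕ)
  (A : ∀ i : Fin N, EuclideanSpace ℝ (Fin n) →L[ℝ] EuclideanSpace ℝ (Fin (md i)))
  (f' : ∀ i : Fin N, EuclideanSpace ℝ (Fin (md i)) → EuclideanSpace ℝ (Fin (md i)))
  (x xt : EuclideanSpace ℝ (Fin n))

noncomputable def gradDiff (i : Fin N) : EuclideanSpace ℝ (Fin n) :=
  (A i).adjoint (f' i (A i x) - f' i (A i xt))

theorem vrEstimator_sub_fullGrad (hb : b ≠ 0) (ω : Fin b → Fin N) :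
    vrEstimator md A f' x xt ω - fullGrad md A f' x
      = (1 / (b : ℝ)) • ∑ j, (gradDiff md A f' x xt (ω j)
          - (1 / (N : ℝ)) • ∑ i, gradDiff md A f' x xt i) := by
  simp only [vrEstimator, fullGrad, gradDiff, map_sub, sum_sub_distrib, smul_sub, sum_const,
    card_univ, Fintype.card_fin, ← Nat.cast_smul_eq_nsmul ℝ, smul_smul]
  field_simp
  abel

end Estimator

theorem vr_estimator_variance_smooth_general (n N b : ℕ) (hN : 0 < N) (hb : 0 < b)
    (md : Fin N → ℕ)
    (A : ∀ i : Fin N, EuclideanSpace ℝ (Fin n) →L[ℝ] EuclideanSpace ℝ (Fin (md i)))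
    (f' : ∀ i : Fin N, EuclideanSpace ℝ (Fin (md i)) → EuclideanSpace ℝ (Fin (md i)))
    (Li : Fin N → ℝ)
    (hLip : ∀ i y z, ‖f' i y - f' i z‖ ≤ Li i * ‖y - z‖)
    (x xt : EuclideanSpace ℝ (Fin n)) :
    uniformExp (fun ω : Fin b → Fin N =>
        ‖vrEstimator md A f' x xt ω - fullGrad md A f' x‖ ^ 2) ≤
      ((⨆ j : Fin N, Li j * ‖A j‖ ^ 2) ^ 2 / (b : ℝ)) * ‖x - xt‖ ^ 2 := by
  set g := gradDiff md A f' x xt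
  set L := ⨆ j : Fin N, Li j * ‖A j‖ ^ 2
  have hg (i : Fin N) : ‖g i‖ ≤ L * ‖x - xt‖ :=
    (norm_adjoint_map_sub_le (A i) (hLip i) x xt).trans <| by
      gcongr
      exact le_ciSup (f := fun j => Li j * ‖A j‖ ^ 2) (Set.finite_range _).bddAbove i
  have hcentred := sum_sub_average_eq_zero g
  have hvar := sum_norm_sub_average_sq_le g
  rw [Fintype.card_fin] at hcentred hvar
  calc uniformExp (fun ω : Fin b → Fin N =>
        ‖vrEstimator md A f' x xt ω - fullGrad md A f' x‖ ^ 2)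
      = 1 / (N * b) * ∑ i, ‖g i - (1 / (N : ℝ)) • ∑ k, g k‖ ^ 2 := by
        rw [← uniformExp_norm_smul_sum_sq hcentred]
        congr 1
        funext ω
        rw [vrEstimator_sub_fullGrad md A f' x xt hb.ne']
    _ ≤ 1 / (N * b) * ∑ _i : Fin N, (L * ‖x - xt‖) ^ 2 := by
        gcongr 1 / _ * ?_
        exact hvar.trans (sum_le_sum fun i _ => by gcongr; exact hg i)
    _ = L ^ 2 / b * ‖x - xt‖ ^ 2 := by
        rw [sum_const, card_univ, Fintype.card_fin, nsmul_eq_mul]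
        field_simp

/-- **Variance bound for the SVRG estimator (smooth case).**
For `i = 1,…,N` let `f_i : ℝ^{m_i} → ℝ` be `L_i`-smooth (gradient `f' i`), let
`A_i : ℝⁿ → ℝ^{m_i}` be linear, `f(x) := (1/N)∑ f_i(A_i x)` and
`L̄ := max_i L_i ‖A_i‖²`.  Fix `x, x̃ ∈ ℝⁿ`, let `κ(1),…,κ(b)` be i.i.d. indices uniform
on `{1,…,N}` and let `u := ∇f_S(x) − ∇f_S(x̃) + ∇f(x̃)`.  Then
`E‖u − ∇f(x)‖² ≤ (L̄²/b)‖x − x̃‖²`. -/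
theorem vr_estimator_variance_smooth (n N b : ℕ) (hN : 0 < N) (hb : 0 < b)
    (md : Fin N → ℕ)
    (A : ∀ i : Fin N, EuclideanSpace ℝ (Fin n) →L[ℝ] EuclideanSpace ℝ (Fin (md i)))
    (f : ∀ i : Fin N, EuclideanSpace ℝ (Fin (md i)) → ℝ)
    (f' : ∀ i : Fin N, EuclideanSpace ℝ (Fin (md i)) → EuclideanSpace ℝ (Fin (md i)))
    (Li : Fin N → ℝ)
    (hgrad : ∀ i y, HasGradientAt (f i) (f' i y) y)
    (hLip : ∀ i y z, ‖f' i y - f' i z‖ ≤ Li i * ‖y - z‖)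
    (x xt : EuclideanSpace ℝ (Fin n)) :
    uniformExp (fun ω : Fin b → Fin N =>
        ‖vrEstimator md A f' x xt ω - fullGrad md A f' x‖ ^ 2) ≤
      ((⨆ j : Fin N, Li j * ‖A j‖ ^ 2) ^ 2 / (b : ℝ)) * ‖x - xt‖ ^ 2 :=
  vr_estimator_variance_smooth_general n N b hN hb md A f' Li hLip x xt
end

section
/- Let f : ℝ^n → ℝ be L-smooth, let φ : ℝ^n → (−∞,∞] be proper, closed, and convex, set ψ := f + φ, let M ∈ ℝ^{n×n} be symmetric positive semidefinite, let α > 0, w ∈ ℝ^n, and x ∈ dom(φ). Define x⁺ := prox_{αφ}(x − αw) and let x̄ ∈ ℝ^n satisfy the implicit equation x̄ = prox_{αφ}(x − α∇f(x̄) − αM(x̄ − x)). Then ψ(x⁺) ≤ ψ(x) + ⟨∇f(x) − ∇f(x̄), x̄ − x⟩ + ⟨∇f(x) − w, x⁺ − x̄⟩ − ⟨x̄ − x, (M + (1/(2α))I)(x̄ − x)⟩ + ½(L − 1/α)‖x⁺ − x‖² − (1/(2α))‖x⁺ − x̄‖². -/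
/-!
Both prox points satisfy the variational inequality of a proximal step: if
`p = prox_{αφ}(x - α d)` then `α⁻¹ ⟪x - p, u - p⟫ ≤ φ u - φ p + ⟪d, u - p⟫` for every `u ∈ dom φ`.
Testing it for `x⁺` at `u = x̄` and for `x̄` at `u = x`, and adding the descent lemma
`f x⁺ ≤ f x + ⟪∇f x, x⁺ - x⟫ + (L/2)‖x⁺ - x‖²`, gives the estimate after expanding the
inner products.
-/

open scoped RealInnerProductSpace
open Set Filter Topology

variable {E : Type*} [NormedAddCommGroup E] [InnerProductSpace ℝ E]

lemma ConvexOn.inner_sub_le_add_of_isMinOn {D : Set E} {g : E → ℝ} (hg : ConvexOn ℝ D g)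
    {v p u : E} (hp : p ∈ D) (hmin : IsMinOn (fun z => g z + ‖v - z‖ ^ 2 / 2) D p)
    (hu : u ∈ D) {t : ℝ} (ht : t ∈ Ioc 0 1) :
    ⟪v - p, u - p⟫ ≤ g u - g p + t * (‖u - p‖ ^ 2 / 2) := by
  obtain ⟨ht0, ht1⟩ := ht
  have hz : (1 - t) • p + t • u = p + t • (u - p) := by module
  have hzD : p + t • (u - p) ∈ D := hz ▸ hg.1 hp hu (by linarith) ht0.le (by ring)
  have hgz : g (p + t • (u - p)) ≤ (1 - t) * g p + t * g u :=
    hz ▸ hg.2 hp hu (by linarith) ht0.le (by ring)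
  have hnorm : ‖v - (p + t • (u - p))‖ ^ 2 =
      ‖v - p‖ ^ 2 - 2 * t * ⟪v - p, u - p⟫ + t ^ 2 * ‖u - p‖ ^ 2 := by
    rw [← sub_sub, norm_sub_sq_real, real_inner_smul_right, norm_smul,
      Real.norm_of_nonneg ht0.le]
    ring
  have hmz := isMinOn_iff.1 hmin _ hzD
  simp only [hnorm] at hmz
  refine le_of_mul_le_mul_left ?_ ht0
  linarith

lemma ConvexOn.inner_sub_le_of_isMinOn {D : Set E} {g : E → ℝ} (hg : ConvexOn ℝ D g)
    {v p u : E} (hp : p ∈ D) (hmin : IsMinOn (fun z => g z + ‖v - z‖ ^ 2 / 2) D p)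
    (hu : u ∈ D) : ⟪v - p, u - p⟫ ≤ g u - g p := by
  have hlim : Tendsto (fun t : ℝ => g u - g p + t * (‖u - p‖ ^ 2 / 2)) (𝓝[>] 0)
      (𝓝 (g u - g p)) := by
    have hcont : Continuous fun t : ℝ => g u - g p + t * (‖u - p‖ ^ 2 / 2) := by fun_prop
    exact (hcont.tendsto' 0 _ (by simp)).mono_left nhdsWithin_le_nhds
  exact ge_of_tendsto hlim (mem_of_superset (Ioc_mem_nhdsGT one_pos)
    fun t ht => hg.inner_sub_le_add_of_isMinOn hp hmin hu ht)

lemma ConvexOn.inv_mul_inner_sub_le_of_isMinOn_prox {D : Set E} {φ : E → ℝ}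
    (hφ : ConvexOn ℝ D φ) {α : ℝ} (hα : 0 < α) {x d p u : E} (hp : p ∈ D)
    (hmin : IsMinOn (fun z => α * φ z + ‖x - α • d - z‖ ^ 2 / 2) D p) (hu : u ∈ D) :
    α⁻¹ * ⟪x - p, u - p⟫ ≤ φ u - φ p + ⟪d, u - p⟫ := by
  have h := (hφ.smul hα.le).inner_sub_le_of_isMinOn hp hmin hu
  rw [sub_right_comm, inner_sub_left, real_inner_smul_left] at h
  rw [inv_mul_le_iff₀ hα]
  simp only [smul_eq_mul] at h
  linarith

lemma descent_lemma [CompleteSpace E] {L : ℝ} {f : E → ℝ} {f' : E → E}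
    (hf : ∀ y, HasGradientAt f (f' y) y) (hLip : ∀ y z, ‖f' y - f' z‖ ≤ L * ‖y - z‖) (x y : E) :
    f y ≤ f x + ⟪f' x, y - x⟫ + L / 2 * ‖y - x‖ ^ 2 := by
  set d := y - x
  have hline (t : ℝ) : HasDerivAt (fun s : ℝ => f (x + s • d)) ⟪f' (x + t • d), d⟫ t := by
    have := (hf (x + t • d)).hasFDerivAt.comp_hasDerivAt t
      (((hasDerivAt_id t).smul_const d).const_add x)
    simp only [id_eq, one_smul, InnerProductSpace.toDual_apply_apply] at this
    exact this
  have hbound (t : ℝ) (ht : 0 ≤ t) : ⟪f' (x + t • d), d⟫ ≤ ⟪f' x, d⟫ + L * t * ‖d‖ ^ 2 := by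
    have hlip : ‖f' (x + t • d) - f' x‖ ≤ L * (t * ‖d‖) := by
      simpa [norm_smul, abs_of_nonneg ht] using hLip (x + t • d) x
    have := (real_inner_le_norm (f' (x + t • d) - f' x) d).trans
      (mul_le_mul_of_nonneg_right hlip (norm_nonneg d))
    rw [inner_sub_left] at this
    linarith
  have hB (t : ℝ) : HasDerivAt (fun s : ℝ => f x + s * ⟪f' x, d⟫ + L / 2 * s ^ 2 * ‖d‖ ^ 2)
      (⟪f' x, d⟫ + L * t * ‖d‖ ^ 2) t := by
    refine ((((hasDerivAt_id t).mul_const ⟪f' x, d⟫).const_add (f x)).add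
      (((hasDerivAt_pow 2 t).const_mul (L / 2)).mul_const (‖d‖ ^ 2))).congr_deriv ?_
    ring
  have := image_le_of_deriv_right_le_deriv_boundary (a := 0) (b := 1)
    (fun t _ => (hline t).continuousAt.continuousWithinAt)
    (fun t _ => (hline t).hasDerivWithinAt) (by simp)
    (fun t _ => (hB t).continuousAt.continuousWithinAt)
    (fun t _ => (hB t).hasDerivWithinAt) (fun t ht => hbound t ht.1)
    (right_mem_Icc.2 zero_le_one)
  simpa [d] using this

theorem spp_one_step_descent_general (n : ℕ) (L α : ℝ) (hα : 0 < α)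
    (f : EuclideanSpace ℝ (Fin n) → ℝ)
    (f' : EuclideanSpace ℝ (Fin n) → EuclideanSpace ℝ (Fin n))
    (hf : ∀ y, HasGradientAt f (f' y) y)
    (hLip : ∀ y z, ‖f' y - f' z‖ ≤ L * ‖y - z‖)
    (D : Set (EuclideanSpace ℝ (Fin n))) (φ : EuclideanSpace ℝ (Fin n) → ℝ)
    (hφconv : ConvexOn ℝ D φ)
    (M : EuclideanSpace ℝ (Fin n) →L[ℝ] EuclideanSpace ℝ (Fin n))
    (w x xplus xbar : EuclideanSpace ℝ (Fin n)) (hx : x ∈ D)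
    (hxplusD : xplus ∈ D)
    (hxplus : ∀ u ∈ D, α * φ xplus + ‖(x - α • w) - xplus‖ ^ 2 / 2 ≤
      α * φ u + ‖(x - α • w) - u‖ ^ 2 / 2)
    (hxbarD : xbar ∈ D)
    (hxbar : ∀ u ∈ D,
      α * φ xbar + ‖(x - α • f' xbar - α • M (xbar - x)) - xbar‖ ^ 2 / 2 ≤
      α * φ u + ‖(x - α • f' xbar - α • M (xbar - x)) - u‖ ^ 2 / 2) :
    f xplus + φ xplus ≤
      f x + φ x + ⟪f' x - f' xbar, xbar - x⟫ + ⟪f' x - w, xplus - xbar⟫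
        - (⟪xbar - x, M (xbar - x)⟫ + (1 / (2 * α)) * ‖xbar - x‖ ^ 2)
        + (1 / 2) * (L - 1 / α) * ‖xplus - x‖ ^ 2
        - (1 / (2 * α)) * ‖xplus - xbar‖ ^ 2 := by
  rw [sub_sub x (α • f' xbar), ← smul_add] at hxbar
  have hplus :=
    hφconv.inv_mul_inner_sub_le_of_isMinOn_prox hα hxplusD (isMinOn_iff.2 hxplus) hxbarD
  have hbar :=
    hφconv.inv_mul_inner_sub_le_of_isMinOn_prox hα hxbarD (isMinOn_iff.2 hxbar) hx
  have hdesc := descent_lemma hf hLip x xplus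
  simp only [← real_inner_self_eq_norm_sq, map_sub, inner_sub_left, inner_sub_right,
    inner_add_left, real_inner_comm] at hplus hbar hdesc ⊢
  linear_combination hplus + hbar + hdesc

/-- **Key one-step descent estimate.**
Let `f : ℝⁿ → ℝ` be `L`-smooth (gradient `f'`), let `φ` be proper, closed and convex
(domain `D`, real values `φ` on `D`, closed epigraph), `ψ := f + φ`, let `M` be a
symmetric positive semidefinite linear map, `α > 0`, `w ∈ ℝⁿ` and `x ∈ dom φ`.  Let
`x⁺ := prox_{αφ}(x − αw)` and let `x̄` satisfy `x̄ = prox_{αφ}(x − α∇f(x̄) − αM(x̄ − x))`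
(both prox points encoded by their defining minimization property over `D`).  Then
`ψ x⁺ ≤ ψ x + ⟪∇f x − ∇f x̄, x̄ − x⟫ + ⟪∇f x − w, x⁺ − x̄⟫ − ⟪x̄ − x, (M + (1/(2α))I)(x̄ − x)⟫
  + ½(L − 1/α)‖x⁺ − x‖² − (1/(2α))‖x⁺ − x̄‖²`. -/
theorem spp_one_step_descent (n : ℕ) (L α : ℝ) (hα : 0 < α)
    (f : EuclideanSpace ℝ (Fin n) → ℝ)
    (f' : EuclideanSpace ℝ (Fin n) → EuclideanSpace ℝ (Fin n))
    (hf : ∀ y, HasGradientAt f (f' y) y)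
    (hLip : ∀ y z, ‖f' y - f' z‖ ≤ L * ‖y - z‖)
    (D : Set (EuclideanSpace ℝ (Fin n))) (φ : EuclideanSpace ℝ (Fin n) → ℝ)
    (hD : D.Nonempty) (hφconv : ConvexOn ℝ D φ)
    (hφclosed : IsClosed {q : EuclideanSpace ℝ (Fin n) × ℝ | q.1 ∈ D ∧ φ q.1 ≤ q.2})
    (M : EuclideanSpace ℝ (Fin n) →L[ℝ] EuclideanSpace ℝ (Fin n))
    (hMsym : IsSelfAdjoint M) (hMpsd : ∀ y, 0 ≤ ⟪M y, y⟫)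
    (w x xplus xbar : EuclideanSpace ℝ (Fin n)) (hx : x ∈ D)
    (hxplusD : xplus ∈ D)
    (hxplus : ∀ u ∈ D, α * φ xplus + ‖(x - α • w) - xplus‖ ^ 2 / 2 ≤
      α * φ u + ‖(x - α • w) - u‖ ^ 2 / 2)
    (hxbarD : xbar ∈ D)
    (hxbar : ∀ u ∈ D,
      α * φ xbar + ‖(x - α • f' xbar - α • M (xbar - x)) - xbar‖ ^ 2 / 2 ≤
      α * φ u + ‖(x - α • f' xbar - α • M (xbar - x)) - u‖ ^ 2 / 2) :
    f xplus + φ xplus ≤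
      f x + φ x + ⟪f' x - f' xbar, xbar - x⟫ + ⟪f' x - w, xplus - xbar⟫
        - (⟪xbar - x, M (xbar - x)⟫ + (1 / (2 * α)) * ‖xbar - x‖ ^ 2)
        + (1 / 2) * (L - 1 / α) * ‖xplus - x‖ ^ 2
        - (1 / (2 * α)) * ‖xplus - xbar‖ ^ 2 :=
  spp_one_step_descent_general n L α hα f f' hf hLip D φ hφconv M w x xplus xbar hx hxplusD hxplus
    hxbarD hxbar
end

section
/- Let f : ℝ^n → ℝ be L-smooth, let φ : ℝ^n → (−∞,∞] be proper, closed, and convex, let M ∈ ℝ^{n×n} be symmetric positive semidefinite with operator norm ‖M‖ ≤ M̄, and let ψ := f + φ. Fix x ∈ ℝ^n and α ∈ (0, 1] with α(L + M̄) < 1, and define ψ_x(y) := ψ(y) + ½⟨y − x, M(y − x)⟩. Then the proximal point x̄ := argmin_y (ψ_x(y) + (1/(2α))‖y − x‖²) is well defined (the objective being strongly convex since 1/α > L + M̄) and satisfies ‖x̄ − x‖ ≥ (1 − (L + M̄)α)·‖F_nat^α(x)‖, where F_nat^α(x) := x − prox_{αφ}(x − α∇f(x)). -/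
open scoped RealInnerProductSpace
open Filter Set Topology

/-!
The objective is `φ` plus a differentiable part whose gradient is strongly monotone with modulus
`1/α - L` (the `M`-term is monotone), so the first-order optimality condition allows at most one
minimizer. A minimizer exists because `φ`, having a closed convex epigraph, has an affine minorant
(Hahn–Banach), which makes the objective coercive.

The optimality condition also says that `x̄` is the proximal point of `αφ` at
`x - α (∇f x̄ + M (x̄ - x))`. The proximal map is nonexpansive, so `x̄` lies within
`α (L + M̄) ‖x̄ - x‖` of `prox_{αφ} (x - α ∇f x)`, whence
`‖F_natᵅ x‖ ≤ (1 + α (L + M̄)) ‖x̄ - x‖`; multiply by `1 - α (L + M̄)` and drop the square.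
-/

section NormedSpace

variable {E : Type*} [NormedAddCommGroup E] [NormedSpace ℝ E]

theorem ConvexOn.le_add_of_isMinOn_add {D : Set E} {φ g : E → ℝ} {g' : E →L[ℝ] ℝ} {a u : E}
    (hφ : ConvexOn ℝ D φ) (hg : HasFDerivAt g g' a) (hmin : IsMinOn (φ + g) D a)
    (ha : a ∈ D) (hu : u ∈ D) : φ a ≤ φ u + g' (u - a) := by
  set ψ : ℝ → ℝ := fun t => g (a + t • (u - a)) + t * (φ u - φ a)
  have hψ : HasDerivAt ψ (g' (u - a) + (φ u - φ a)) 0 := by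
    have hline : HasDerivAt (fun t : ℝ => a + t • (u - a)) (u - a) 0 := by
      simpa using ((hasDerivAt_id (0 : ℝ)).smul_const (u - a)).const_add a
    exact (hg.comp_hasDerivAt_of_eq 0 hline (by simp)).add
      ((hasDerivAt_id (0 : ℝ)).mul_const (φ u - φ a)) |>.congr_deriv (by simp)
  have hψmin : IsLocalMinOn ψ (Icc 0 1) 0 := by
    refine IsMinOn.localize fun t ht => ?_
    obtain ⟨ht0, ht1⟩ := ht
    have hseg : (1 - t) • a + t • u = a + t • (u - a) := by module
    have hmem := hφ.1 ha hu (sub_nonneg.2 ht1) ht0 (sub_add_cancel 1 t)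
    have hconv := hφ.2 ha hu (sub_nonneg.2 ht1) ht0 (sub_add_cancel 1 t)
    rw [hseg] at hmem hconv
    have := hmin hmem
    simp only [mem_ofPred_eq, Pi.add_apply, smul_eq_mul] at this hconv
    simp only [ψ, zero_smul, add_zero, zero_mul, mem_ofPred_eq]
    linarith
  have hdir : (1 : ℝ) ∈ posTangentConeAt (Icc (0 : ℝ) 1) 0 :=
    mem_posTangentConeAt_of_segment_subset (by simp [segment_eq_Icc])
  have := hψmin.hasFDerivWithinAt_nonneg hψ.hasFDerivAt.hasFDerivWithinAt hdir
  rw [ContinuousLinearMap.toSpanSingleton_apply, one_smul] at this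
  linarith

theorem norm_image_sub_sub_le_of_lipschitz_deriv {F : Type*} [NormedAddCommGroup F]
    [NormedSpace ℝ F] {f : E → F} {f' : E → E →L[ℝ] F} {L : ℝ}
    (hf : ∀ y, HasFDerivAt f (f' y) y) (hL : ∀ y z, ‖f' y - f' z‖ ≤ L * ‖y - z‖) (x y : E) :
    ‖f y - f x - f' x (y - x)‖ ≤ L / 2 * ‖y - x‖ ^ 2 := by
  set d := y - x
  set h : ℝ → F := fun s => f (x + s • d) - s • f' x d - f x
  have hh : ∀ s, HasDerivAt h (f' (x + s • d) d - f' x d) s := by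
    intro s
    have hline : HasDerivAt (fun t : ℝ => x + t • d) d s := by
      simpa using ((hasDerivAt_id s).smul_const d).const_add x
    exact ((((hf _).comp_hasDerivAt s hline).sub
      ((hasDerivAt_id s).smul_const (f' x d))).sub_const (f x)).congr_deriv (by simp)
  have hB : ∀ s, HasDerivAt (fun s : ℝ => L / 2 * s ^ 2 * ‖d‖ ^ 2) (L * s * ‖d‖ ^ 2) s := by
    intro s
    exact (((hasDerivAt_pow 2 s).const_mul (L / 2)).mul_const (‖d‖ ^ 2)).congr_deriv
      (by push_cast; ring)
  have hbound : ∀ s ∈ Ico (0 : ℝ) 1, ‖f' (x + s • d) d - f' x d‖ ≤ L * s * ‖d‖ ^ 2 := by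
    rintro s ⟨hs0, -⟩
    calc ‖f' (x + s • d) d - f' x d‖ = ‖(f' (x + s • d) - f' x) d‖ := rfl
      _ ≤ ‖f' (x + s • d) - f' x‖ * ‖d‖ := ContinuousLinearMap.le_opNorm _ _
      _ ≤ L * ‖x + s • d - x‖ * ‖d‖ := by gcongr; exact hL _ _
      _ = L * s * ‖d‖ ^ 2 := by
        rw [add_sub_cancel_left, norm_smul, Real.norm_of_nonneg hs0]; ring
  have := image_norm_le_of_norm_deriv_right_le_deriv_boundary
    (fun s _ => (hh s).continuousAt.continuousWithinAt) (fun s _ => (hh s).hasDerivWithinAt)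
    (by simp [h]) hB hbound (right_mem_Icc.2 zero_le_one)
  have h1 : h 1 = f y - f x - f' x (y - x) := by
    simp only [h, d, one_smul, add_sub_cancel]
    abel
  rwa [h1, one_pow, mul_one] at this

theorem ConvexOn.exists_affine_le_of_isClosed_epigraph {D : Set E} {φ : E → ℝ} (hφ : ConvexOn ℝ D φ)
    (hclosed : IsClosed {q : E × ℝ | q.1 ∈ D ∧ φ q.1 ≤ q.2}) (hD : D.Nonempty) :
    ∃ (ℓ : E →L[ℝ] ℝ) (c : ℝ), ∀ y ∈ D, ℓ y + c ≤ φ y := by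
  obtain ⟨y₀, hy₀⟩ := hD
  obtain ⟨Λ, u, hΛy₀, hΛ⟩ := geometric_hahn_banach_point_closed hφ.convex_epigraph hclosed
    (x := (y₀, φ y₀ - 1)) fun h => by linarith [h.2]
  set β := Λ (0, 1)
  have hsplit : ∀ y t, Λ (y, t) = Λ (y, 0) + t * β := by
    intro y t
    rw [show ((y, t) : E × ℝ) = (y, 0) + t • (0, 1) by ext <;> simp, map_add, map_smul,
      smul_eq_mul]
  have hβ : 0 < β := by
    have := hΛ (y₀, φ y₀) ⟨hy₀, le_rfl⟩
    rw [hsplit] at this hΛy₀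
    linarith
  refine ⟨-β⁻¹ • Λ.comp (ContinuousLinearMap.inl ℝ E ℝ), u / β, fun y hy => ?_⟩
  have := hΛ (y, φ y) ⟨hy, le_rfl⟩
  rw [hsplit] at this
  simp only [FunLike.coe_smul, ContinuousLinearMap.comp_apply,
    ContinuousLinearMap.inl_apply, Pi.smul_apply, smul_eq_mul]
  rw [neg_mul, ← div_eq_inv_mul, neg_add_eq_sub, ← sub_div, div_le_iff₀ hβ]
  linarith

end NormedSpace

theorem exists_isMinOn_add_of_isClosed_epigraph {E : Type*} [TopologicalSpace E]
    {D : Set E} {φ g : E → ℝ} {c : ℝ}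
    (hclosed : IsClosed {q : E × ℝ | q.1 ∈ D ∧ φ q.1 ≤ q.2}) (hD : D.Nonempty)
    (hφ : ∀ y ∈ D, c ≤ φ y) (hg : Continuous g) (hcoer : Tendsto g (cocompact E) atTop) :
    ∃ a ∈ D, IsMinOn (φ + g) D a := by
  obtain ⟨y₀, hy₀⟩ := hD
  -- `φ` need not be continuous on `D`: minimize the continuous `t + g y` over the epigraph instead.
  set H : E × ℝ → ℝ := fun q => q.2 + g q.1
  set H₀ := H (y₀, φ y₀)
  obtain ⟨K, hK, hgK⟩ := mem_cocompact.1 (hcoer.eventually_ge_atTop (H₀ - c))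
  obtain ⟨m, hm⟩ := (hK.bddBelow_image hg.continuousOn)
  have hc : ∀ᶠ q in cocompact (E × ℝ) ⊓ 𝓟 {q : E × ℝ | q.1 ∈ D ∧ φ q.1 ≤ q.2}, H₀ ≤ H q := by
    refine (hasBasis_cocompact.inf_principal _).eventually_iff.2
      ⟨K ×ˢ Icc c (H₀ - m), hK.prod isCompact_Icc, ?_⟩
    rintro ⟨y, t⟩ ⟨hout, hyD, hyt⟩
    have hct : c ≤ t := (hφ y hyD).trans hyt
    by_cases hyK : y ∈ K
    · have : H₀ - m < t := by
        by_contra! h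
        exact hout ⟨hyK, hct, h⟩
      have := hm (mem_image_of_mem g hyK)
      simp only [H]
      linarith
    · have : H₀ - c ≤ g y := hgK hyK
      simp only [H]
      linarith
  obtain ⟨q, ⟨hqD, hqt⟩, hqmin⟩ := (by fun_prop : Continuous H).continuousOn.exists_isMinOn'
    hclosed (x₀ := (y₀, φ y₀)) ⟨hy₀, le_rfl⟩ hc
  refine ⟨q.1, hqD, fun y hy => ?_⟩
  have : H q ≤ H (y, φ y) := hqmin ⟨hy, le_rfl⟩
  simp only [H, mem_ofPred_eq, Pi.add_apply] at this ⊢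
  linarith

theorem tendsto_cocompact_atTop_of_quadratic_le {E : Type*} [NormedAddCommGroup E] [ProperSpace E]
    {h : E → ℝ} {κ B C : ℝ} (x : E) (hκ : 0 < κ)
    (hh : ∀ y, κ * ‖y - x‖ ^ 2 - B * ‖y - x‖ + C ≤ h y) : Tendsto h (cocompact E) atTop := by
  have hr : Tendsto (fun y => ‖y - x‖) (cocompact E) atTop :=
    tendsto_atTop_mono (fun y => by linarith [norm_sub_norm_le y x])
      (tendsto_atTop_add_const_right _ (-‖x‖) tendsto_norm_cocompact_atTop)
  have hq : Tendsto (fun r : ℝ => r * (κ * r - B) + C) atTop atTop :=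
    tendsto_atTop_add_const_right _ C (tendsto_id.atTop_mul_atTop₀
      (tendsto_atTop_add_const_right _ (-B) (tendsto_id.const_mul_atTop hκ)))
  refine tendsto_atTop_mono (fun y => le_trans (le_of_eq ?_) (hh y)) (hq.comp hr)
  simp only [Function.comp_apply]
  ring

section Hilbert

variable {E : Type*} [NormedAddCommGroup E] [InnerProductSpace ℝ E]

theorem norm_sub_le_of_forall_le_add_inner {D : Set E} {ψ : E → ℝ} {a₁ a₂ z₁ z₂ : E}
    (ha₁ : a₁ ∈ D) (ha₂ : a₂ ∈ D) (h₁ : ∀ u ∈ D, ψ a₁ ≤ ψ u + ⟪a₁ - z₁, u - a₁⟫)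
    (h₂ : ∀ u ∈ D, ψ a₂ ≤ ψ u + ⟪a₂ - z₂, u - a₂⟫) : ‖a₁ - a₂‖ ≤ ‖z₁ - z₂‖ := by
  have hsum : ‖a₁ - a₂‖ ^ 2 ≤ ⟪z₁ - z₂, a₁ - a₂⟫ := by
    have e : ⟪a₁ - z₁, a₂ - a₁⟫ + ⟪a₂ - z₂, a₁ - a₂⟫ = ⟪z₁ - z₂, a₁ - a₂⟫ - ‖a₁ - a₂‖ ^ 2 := by
      rw [← real_inner_self_eq_norm_sq, ← neg_sub a₁ a₂, inner_neg_right, neg_add_eq_sub,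
        ← inner_sub_left, ← inner_sub_left]
      congr 1
      abel
    linarith [h₁ a₂ ha₂, h₂ a₁ ha₁]
  have := hsum.trans (real_inner_le_norm _ _)
  nlinarith [norm_nonneg (a₁ - a₂), norm_nonneg (z₁ - z₂)]

theorem hasGradientAt_norm_sub_sq_div_two [CompleteSpace E] (z a : E) :
    HasGradientAt (fun u => ‖z - u‖ ^ 2 / 2) (a - z) a := by
  rw [hasGradientAt_iff_hasFDerivAt]
  have h := (((hasFDerivAt_id a).const_sub z).norm_sq).mul_const (2⁻¹ : ℝ)
  simp only [id, ← div_eq_mul_inv] at h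
  refine h.congr_fderiv ?_
  ext d
  simp

variable [CompleteSpace E]

noncomputable def smoothPart (f : E → ℝ) (M : E →L[ℝ] E) (α : ℝ) (x y : E) : ℝ :=
  f y + 1 / 2 * ⟪y - x, M (y - x)⟫ + ‖y - x‖ ^ 2 / (2 * α)

theorem hasGradientAt_smoothPart {f : E → ℝ} {f' : E} {M : E →L[ℝ] E} (hM : IsSelfAdjoint M)
    (α : ℝ) (x : E) {y : E} (hf : HasGradientAt f f' y) :
    HasGradientAt (smoothPart f M α x) (f' + M (y - x) + α⁻¹ • (y - x)) y := by
  rw [hasGradientAt_iff_hasFDerivAt]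
  have hsub := (hasFDerivAt_id (𝕜 := ℝ) y).sub_const x
  have h := (hf.hasFDerivAt.add ((hsub.inner ℝ (M.hasFDerivAt.comp y hsub)).const_mul
    (1 / 2 : ℝ))).add (hsub.norm_sq.mul_const (2 * α)⁻¹)
  simp only [id, ← div_eq_mul_inv] at h
  refine h.congr_fderiv ?_
  ext d
  have hMd : ∀ a b, ⟪a, M b⟫ = ⟪M a, b⟫ := fun a b => (hM.isSymmetric a b).symm
  simp [hMd, inner_sub_right, real_inner_comm d]
  ring

theorem ConvexOn.eq_of_isMinOn_add {D : Set E} {φ g : E → ℝ} {G : E → E} {μ : ℝ}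
    (hφ : ConvexOn ℝ D φ) (hg : ∀ y, HasGradientAt g (G y) y) (hμ : 0 < μ)
    (hG : ∀ y z, μ * ‖y - z‖ ^ 2 ≤ ⟪G y - G z, y - z⟫) {y₁ y₂ : E} (h₁ : y₁ ∈ D) (h₂ : y₂ ∈ D)
    (hmin₁ : IsMinOn (φ + g) D y₁) (hmin₂ : IsMinOn (φ + g) D y₂) : y₁ = y₂ := by
  have e₁ := hφ.le_add_of_isMinOn_add (hg y₁).hasFDerivAt hmin₁ h₁ h₂
  have e₂ := hφ.le_add_of_isMinOn_add (hg y₂).hasFDerivAt hmin₂ h₂ h₁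
  simp only [InnerProductSpace.toDual_apply_apply] at e₁ e₂
  have hsum : ⟪G y₁ - G y₂, y₁ - y₂⟫ = -(⟪G y₁, y₂ - y₁⟫ + ⟪G y₂, y₁ - y₂⟫) := by
    rw [← neg_sub y₁ y₂, inner_neg_right, inner_sub_left]
    ring
  have : μ * ‖y₁ - y₂‖ ^ 2 ≤ 0 := by linarith [hG y₁ y₂]
  have : ‖y₁ - y₂‖ ^ 2 ≤ 0 := by nlinarith
  rw [← sub_eq_zero, ← norm_eq_zero]
  exact (pow_eq_zero_iff two_ne_zero).1 (le_antisymm this (sq_nonneg _))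

theorem tendsto_smoothPart_add_cocompact [ProperSpace E] {f : E → ℝ} {f' : E → E}
    {M : E →L[ℝ] E} {L α : ℝ} (hf : ∀ y, HasGradientAt f (f' y) y)
    (hLip : ∀ y z, ‖f' y - f' z‖ ≤ L * ‖y - z‖) (hM : ∀ y, 0 ≤ ⟪M y, y⟫) (hα : 0 < α)
    (hαL : L < α⁻¹) (x : E) (ℓ : E →L[ℝ] ℝ) :
    Tendsto (smoothPart f M α x + ⇑ℓ) (cocompact E) atTop := by
  refine tendsto_cocompact_atTop_of_quadratic_le (B := ‖f' x‖ + ‖ℓ‖) (C := f x + ℓ x) x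
    (half_pos (sub_pos.2 hαL)) fun y => ?_
  have hdesc := norm_image_sub_sub_le_of_lipschitz_deriv (fun y => (hf y).hasFDerivAt)
    (fun y z => by rw [← map_sub, LinearIsometryEquiv.norm_map]; exact hLip y z) x y
  simp only [InnerProductSpace.toDual_apply_apply] at hdesc
  have hf_lower := (abs_le.1 hdesc).1
  have hgrad : -(‖f' x‖ * ‖y - x‖) ≤ ⟪f' x, y - x⟫ := by
    linarith [(abs_le.1 (abs_real_inner_le_norm (f' x) (y - x))).1]
  have hℓ : ℓ x - ‖ℓ‖ * ‖y - x‖ ≤ ℓ y := by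
    have := (abs_le.1 ((ℓ.le_opNorm (y - x)).trans_eq' (Real.norm_eq_abs _).symm)).1
    rw [map_sub] at this
    linarith
  have hquad : 0 ≤ ⟪y - x, M (y - x)⟫ := real_inner_comm (M (y - x)) _ ▸ hM (y - x)
  have hnorm : ‖y - x‖ ^ 2 / (2 * α) = α⁻¹ * ‖y - x‖ ^ 2 / 2 := by field_simp
  simp only [Pi.add_apply, smoothPart, hnorm]
  linarith

theorem existsUnique_isMinOn_add_smoothPart [ProperSpace E] {D : Set E} {φ f : E → ℝ}
    {f' : E → E} {M : E →L[ℝ] E} {L α : ℝ} (hf : ∀ y, HasGradientAt f (f' y) y)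
    (hLip : ∀ y z, ‖f' y - f' z‖ ≤ L * ‖y - z‖) (hφ : ConvexOn ℝ D φ)
    (hclosed : IsClosed {q : E × ℝ | q.1 ∈ D ∧ φ q.1 ≤ q.2}) (hD : D.Nonempty)
    (hMsym : IsSelfAdjoint M) (hMpsd : ∀ y, 0 ≤ ⟪M y, y⟫) (hα : 0 < α) (hαL : L < α⁻¹)
    (x : E) : ∃! a, a ∈ D ∧ IsMinOn (φ + smoothPart f M α x) D a := by
  have hg y := hasGradientAt_smoothPart hMsym α x (hf y)
  obtain ⟨ℓ, c, hℓ⟩ := hφ.exists_affine_le_of_isClosed_epigraph hclosed hD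
  have hclosed' : IsClosed {q : E × ℝ | q.1 ∈ D ∧ (φ - ℓ) q.1 ≤ q.2} := by
    convert hclosed.preimage (f := fun q : E × ℝ => (q.1, q.2 + ℓ q.1)) (by fun_prop) using 1
    ext q
    simp
  obtain ⟨a, ha, hmin⟩ := exists_isMinOn_add_of_isClosed_epigraph hclosed' hD
    (fun y hy => le_sub_iff_add_le'.2 (hℓ y hy))
    (continuous_iff_continuousAt.2 fun y =>
      ((hg y).differentiableAt.add ℓ.differentiableAt).continuousAt)
    (tendsto_smoothPart_add_cocompact hf hLip hMpsd hα hαL x ℓ)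
  rw [sub_add_add_cancel] at hmin
  have hmono : ∀ y z, (α⁻¹ - L) * ‖y - z‖ ^ 2 ≤
      ⟪f' y + M (y - x) + α⁻¹ • (y - x) - (f' z + M (z - x) + α⁻¹ • (z - x)), y - z⟫ := by
    intro y z
    have hdiff : f' y + M (y - x) + α⁻¹ • (y - x) - (f' z + M (z - x) + α⁻¹ • (z - x))
        = (f' y - f' z) + M (y - z) + α⁻¹ • (y - z) := by
      simp only [map_sub, smul_sub]
      abel
    have hf' : -(L * ‖y - z‖ ^ 2) ≤ ⟪f' y - f' z, y - z⟫ := by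
      have := (abs_le.1 (abs_real_inner_le_norm (f' y - f' z) (y - z))).1
      nlinarith [hLip y z, norm_nonneg (y - z)]
    rw [hdiff, inner_add_left, inner_add_left, real_inner_smul_left, real_inner_self_eq_norm_sq]
    linarith [hMpsd (y - z)]
  exact ⟨a, ⟨ha, hmin⟩, fun b ⟨hb, hbmin⟩ =>
    hφ.eq_of_isMinOn_add hg (sub_pos.2 hαL) hmono hb ha hbmin hmin⟩

theorem norm_sub_le_of_isMinOn_add_smoothPart {D : Set E} {φ f : E → ℝ} {f' : E → E}
    {M : E →L[ℝ] E} {L α : ℝ} (hf : ∀ y, HasGradientAt f (f' y) y)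
    (hLip : ∀ y z, ‖f' y - f' z‖ ≤ L * ‖y - z‖) (hφ : ConvexOn ℝ D φ) (hMsym : IsSelfAdjoint M)
    (hα : 0 < α) {x p xbar : E} (hp : p ∈ D)
    (hpmin : ∀ u ∈ D, α * φ p + ‖x - α • f' x - p‖ ^ 2 / 2 ≤ α * φ u + ‖x - α • f' x - u‖ ^ 2 / 2)
    (hxbar : xbar ∈ D) (hmin : IsMinOn (φ + smoothPart f M α x) D xbar) :
    ‖xbar - p‖ ≤ α * (L + ‖M‖) * ‖xbar - x‖ := by
  set z₁ := x - α • f' x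
  set z₂ := x - α • (f' xbar + M (xbar - x))
  have hp' : ∀ u ∈ D, α * φ p ≤ α * φ u + ⟪p - z₁, u - p⟫ := fun u hu =>
    (hφ.smul hα.le).le_add_of_isMinOn_add (hasGradientAt_norm_sub_sq_div_two z₁ p).hasFDerivAt
      (fun v hv => hpmin v hv) hp hu
  have hxbar' : ∀ u ∈ D, α * φ xbar ≤ α * φ u + ⟪xbar - z₂, u - xbar⟫ := by
    intro u hu
    have := hφ.le_add_of_isMinOn_add (hasGradientAt_smoothPart hMsym α x (hf xbar)).hasFDerivAt
      hmin hxbar hu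
    rw [InnerProductSpace.toDual_apply_apply] at this
    have hz : xbar - z₂ = α • (f' xbar + M (xbar - x) + α⁻¹ • (xbar - x)) := by
      rw [smul_add, smul_smul, mul_inv_cancel₀ hα.ne', one_smul]
      simp only [z₂]
      abel
    rw [hz, real_inner_smul_left]
    nlinarith
  have hz : ‖z₁ - z₂‖ ≤ α * (L + ‖M‖) * ‖xbar - x‖ := by
    have : z₁ - z₂ = α • (f' xbar - f' x + M (xbar - x)) := by
      simp only [z₁, z₂, smul_add, smul_sub]
      abel
    rw [this, norm_smul, Real.norm_of_nonneg hα.le, mul_assoc]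
    gcongr
    calc ‖f' xbar - f' x + M (xbar - x)‖ ≤ ‖f' xbar - f' x‖ + ‖M (xbar - x)‖ := norm_add_le _ _
      _ ≤ L * ‖xbar - x‖ + ‖M‖ * ‖xbar - x‖ := add_le_add (hLip _ _) (M.le_opNorm _)
      _ = (L + ‖M‖) * ‖xbar - x‖ := by ring
  exact (norm_sub_le_of_forall_le_add_inner (ψ := fun u => α * φ u) hxbar hp hxbar' hp').trans
    (norm_sub_rev z₁ z₂ ▸ hz)

end Hilbert

theorem prox_step_dominates_residual_general (n : ℕ) (L Mbar α : ℝ)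
    (f : EuclideanSpace ℝ (Fin n) → ℝ)
    (f' : EuclideanSpace ℝ (Fin n) → EuclideanSpace ℝ (Fin n))
    (hf : ∀ y, HasGradientAt f (f' y) y)
    (hLip : ∀ y z, ‖f' y - f' z‖ ≤ L * ‖y - z‖)
    (D : Set (EuclideanSpace ℝ (Fin n))) (φ : EuclideanSpace ℝ (Fin n) → ℝ)
    (hD : D.Nonempty) (hφconv : ConvexOn ℝ D φ)
    (hφclosed : IsClosed {q : EuclideanSpace ℝ (Fin n) × ℝ | q.1 ∈ D ∧ φ q.1 ≤ q.2})
    (P : EuclideanSpace ℝ (Fin n) → EuclideanSpace ℝ (Fin n))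
    (hP : ∀ y, P y ∈ D ∧ ∀ u ∈ D,
      α * φ (P y) + ‖y - P y‖ ^ 2 / 2 ≤ α * φ u + ‖y - u‖ ^ 2 / 2)
    (M : EuclideanSpace ℝ (Fin n) →L[ℝ] EuclideanSpace ℝ (Fin n))
    (hMsym : IsSelfAdjoint M) (hMpsd : ∀ y, 0 ≤ ⟪M y, y⟫) (hMnorm : ‖M‖ ≤ Mbar)
    (x : EuclideanSpace ℝ (Fin n)) (hα0 : 0 < α)
    (hαLM : α * (L + Mbar) < 1) :
    (∃! xbar : EuclideanSpace ℝ (Fin n), xbar ∈ D ∧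
      IsMinOn (fun y => f y + φ y + (1 / 2) * ⟪y - x, M (y - x)⟫
        + ‖y - x‖ ^ 2 / (2 * α)) D xbar) ∧
    (∀ xbar : EuclideanSpace ℝ (Fin n), xbar ∈ D →
      IsMinOn (fun y => f y + φ y + (1 / 2) * ⟪y - x, M (y - x)⟫
        + ‖y - x‖ ^ 2 / (2 * α)) D xbar →
      (1 - (L + Mbar) * α) * ‖x - P (x - α • f' x)‖ ≤ ‖xbar - x‖) := by
  have hobjective : (fun y => f y + φ y + (1 / 2) * ⟪y - x, M (y - x)⟫ + ‖y - x‖ ^ 2 / (2 * α))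
      = φ + smoothPart f M α x := by
    funext y
    simp only [Pi.add_apply, smoothPart]
    ring
  have hαL : L < α⁻¹ := by
    have := (norm_nonneg M).trans hMnorm
    rw [← mul_lt_mul_iff_of_pos_left hα0, mul_inv_cancel₀ hα0.ne']
    nlinarith
  rw [hobjective]
  refine ⟨existsUnique_isMinOn_add_smoothPart hf hLip hφconv hφclosed hD hMsym hMpsd hα0 hαL x,
    fun xbar hxbar hmin => ?_⟩
  set p := P (x - α • f' x)
  have hclose : ‖xbar - p‖ ≤ α * (L + Mbar) * ‖xbar - x‖ :=
    (norm_sub_le_of_isMinOn_add_smoothPart hf hLip hφconv hMsym hα0 (hP _).1 (hP _).2 hxbar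
      hmin).trans (by gcongr)
  have htri : ‖x - p‖ ≤ ‖xbar - x‖ + ‖xbar - p‖ :=
    norm_sub_rev x xbar ▸ norm_sub_le_norm_sub_add_norm_sub x xbar p
  have hc : 0 ≤ 1 - (L + Mbar) * α := by linarith
  nlinarith [mul_le_mul_of_nonneg_left htri hc, mul_le_mul_of_nonneg_left hclose hc,
    mul_nonneg (sq_nonneg ((L + Mbar) * α)) (norm_nonneg (xbar - x))]

/-- **The proximal step dominates the natural residual.**
Let `f : ℝⁿ → ℝ` be `L`-smooth (gradient `f'`), `φ` proper, closed and convex (domain `D`,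
real values `φ` on `D`, closed epigraph, prox operator `P` at scale `α` given by its
minimization property), `M` symmetric psd with `‖M‖ ≤ M̄`, and fix `x ∈ ℝⁿ`, `α ∈ (0,1]`
with `α (L + M̄) < 1`.  Then the proximal point
`x̄ := argmin_y (f y + φ y + ½⟪y − x, M (y − x)⟫ + ‖y − x‖²/(2α))` is well defined
(exists and is unique) and every such minimizer satisfies
`‖x̄ − x‖ ≥ (1 − (L + M̄) α) ‖F_natᵅ x‖` with `F_natᵅ x := x − P (x − α ∇f x)`. -/
theorem prox_step_dominates_residual (n : ℕ) (L Mbar α : ℝ)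
    (f : EuclideanSpace ℝ (Fin n) → ℝ)
    (f' : EuclideanSpace ℝ (Fin n) → EuclideanSpace ℝ (Fin n))
    (hf : ∀ y, HasGradientAt f (f' y) y)
    (hLip : ∀ y z, ‖f' y - f' z‖ ≤ L * ‖y - z‖)
    (D : Set (EuclideanSpace ℝ (Fin n))) (φ : EuclideanSpace ℝ (Fin n) → ℝ)
    (hD : D.Nonempty) (hφconv : ConvexOn ℝ D φ)
    (hφclosed : IsClosed {q : EuclideanSpace ℝ (Fin n) × ℝ | q.1 ∈ D ∧ φ q.1 ≤ q.2})
    (P : EuclideanSpace ℝ (Fin n) → EuclideanSpace ℝ (Fin n))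
    (hP : ∀ y, P y ∈ D ∧ ∀ u ∈ D,
      α * φ (P y) + ‖y - P y‖ ^ 2 / 2 ≤ α * φ u + ‖y - u‖ ^ 2 / 2)
    (M : EuclideanSpace ℝ (Fin n) →L[ℝ] EuclideanSpace ℝ (Fin n))
    (hMsym : IsSelfAdjoint M) (hMpsd : ∀ y, 0 ≤ ⟪M y, y⟫) (hMnorm : ‖M‖ ≤ Mbar)
    (x : EuclideanSpace ℝ (Fin n)) (hα0 : 0 < α) (hα1 : α ≤ 1)
    (hαLM : α * (L + Mbar) < 1) :
    (∃! xbar : EuclideanSpace ℝ (Fin n), xbar ∈ D ∧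
      IsMinOn (fun y => f y + φ y + (1 / 2) * ⟪y - x, M (y - x)⟫
        + ‖y - x‖ ^ 2 / (2 * α)) D xbar) ∧
    (∀ xbar : EuclideanSpace ℝ (Fin n), xbar ∈ D →
      IsMinOn (fun y => f y + φ y + (1 / 2) * ⟪y - x, M (y - x)⟫
        + ‖y - x‖ ^ 2 / (2 * α)) D xbar →
      (1 - (L + Mbar) * α) * ‖x - P (x - α • f' x)‖ ≤ ‖xbar - x‖) :=
  prox_step_dominates_residual_general n L Mbar α f f' hf hLip D φ hD hφconv hφclosed P hP M hMsym
    hMpsd hMnorm x hα0 hαLM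
end

section
/- Fix ν > 0 and b ∈ ℝ and let f(x) := ln(1 + (x − b)²/ν) for x ∈ ℝ. Then f is twice continuously differentiable with f''(x) = 2(ν − (x − b)²)/(ν + (x − b)²)², the infimum of f'' over ℝ equals −1/(4ν) and is attained exactly at x ∈ {b + √(3ν), b − √(3ν)}, and consequently f is (1/(4ν))-weakly convex, i.e., the function x ↦ f(x) + x²/(8ν) is convex on ℝ. -/
/-!
Writing `t = x - b`, the second derivative is `2 (ν - t²) / (ν + t²)²`, and adding `1 / (4ν)`
to it gives the perfect square `(t² - 3ν)² / (4ν (ν + t²)²)`. Hence `f'' ≥ -1/(4ν)`, with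
equality exactly when `t² = 3ν`, and adding the quadratic `x² / (8ν)` makes the second
derivative nonnegative.
-/

open Real Set

theorem convexOn_univ_add_mul_sq_of_hasDerivAt2 {f f' f'' : ℝ → ℝ} {ρ : ℝ}
    (hf : ∀ x, HasDerivAt f (f' x) x) (hf' : ∀ x, HasDerivAt f' (f'' x) x)
    (hρ : ∀ x, -ρ ≤ f'' x) : ConvexOn ℝ univ (fun x => f x + ρ / 2 * x ^ 2) := by
  have hsq : ∀ x : ℝ, HasDerivAt (fun x => ρ / 2 * x ^ 2) (ρ * x) x := fun x =>
    ((hasDerivAt_pow 2 x).const_mul (ρ / 2)).congr_deriv (by simp only [Nat.cast_ofNat]; ring)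
  refine convexOn_of_hasDerivWithinAt2_nonneg convex_univ
    (f' := fun x => f' x + ρ * x) (f'' := fun x => f'' x + ρ) ?_ ?_ ?_ ?_
  · exact fun x _ => ((hf x).add (hsq x)).continuousAt.continuousWithinAt
  · exact fun x _ => ((hf x).add (hsq x)).hasDerivWithinAt
  · exact fun x _ => ((hf' x).add ((hasDerivAt_id x).const_mul ρ)
      |>.congr_deriv (by simp)).hasDerivWithinAt
  · exact fun x _ => neg_le_iff_add_nonneg.mp (hρ x)

section StudentT

variable {ν : ℝ} (hν : 0 < ν) (b : ℝ)
include hν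

theorem hasDerivAt_log_one_add_sq_sub_div (x : ℝ) :
    HasDerivAt (fun x => log (1 + (x - b) ^ 2 / ν)) (2 * (x - b) / (ν + (x - b) ^ 2)) x := by
  have hsub : HasDerivAt (fun x : ℝ => x - b) 1 x := (hasDerivAt_id x).sub_const b
  have hpos : 0 < 1 + (x - b) ^ 2 / ν := by positivity
  refine (((hsub.pow 2).div_const ν).const_add 1).log hpos.ne' |>.congr_deriv ?_
  simp only [Pi.pow_apply]
  field_simp
  ring

theorem hasDerivAt_two_mul_sub_div_add_sq (x : ℝ) :
    HasDerivAt (fun x => 2 * (x - b) / (ν + (x - b) ^ 2))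
      (2 * (ν - (x - b) ^ 2) / (ν + (x - b) ^ 2) ^ 2) x := by
  have hsub : HasDerivAt (fun x : ℝ => x - b) 1 x := (hasDerivAt_id x).sub_const b
  have hpos : 0 < ν + (x - b) ^ 2 := by positivity
  refine (hsub.const_mul 2).div ((hsub.pow 2).const_add ν) hpos.ne' |>.congr_deriv ?_
  simp only [Pi.pow_apply]
  field_simp
  ring

theorem two_mul_sub_div_add_sq_add_inv_eq (t : ℝ) :
    2 * (ν - t ^ 2) / (ν + t ^ 2) ^ 2 + 1 / (4 * ν) =
      (t ^ 2 - 3 * ν) ^ 2 / (4 * ν * (ν + t ^ 2) ^ 2) := by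
  have hpos : 0 < ν + t ^ 2 := by positivity
  field_simp
  ring

theorem neg_inv_le_two_mul_sub_div_add_sq (t : ℝ) :
    -(1 / (4 * ν)) ≤ 2 * (ν - t ^ 2) / (ν + t ^ 2) ^ 2 := by
  have hsq : 0 ≤ (t ^ 2 - 3 * ν) ^ 2 / (4 * ν * (ν + t ^ 2) ^ 2) := by positivity
  linarith [two_mul_sub_div_add_sq_add_inv_eq hν t]

theorem two_mul_sub_div_add_sq_eq_neg_inv_iff (t : ℝ) :
    2 * (ν - t ^ 2) / (ν + t ^ 2) ^ 2 = -(1 / (4 * ν)) ↔ t ^ 2 = 3 * ν := by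
  have hpos : 0 < 4 * ν * (ν + t ^ 2) ^ 2 := by positivity
  rw [← add_eq_zero_iff_eq_neg, two_mul_sub_div_add_sq_add_inv_eq hν, div_eq_zero_iff,
    or_iff_left hpos.ne', sq_eq_zero_iff, sub_eq_zero]

end StudentT

/-- **Student-t loss is weakly convex.**
Fix `ν > 0` and `b ∈ ℝ` and let `f x := log (1 + (x − b)²/ν)`.  Then `f` is twice
continuously differentiable with `f'' x = 2(ν − (x − b)²)/(ν + (x − b)²)²`, the infimum of
`f''` over `ℝ` equals `−1/(4ν)` and is attained exactly at `x ∈ {b + √(3ν), b − √(3ν)}`,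
and consequently `f` is `(1/(4ν))`-weakly convex, i.e. `x ↦ f x + x²/(8ν)` is convex on `ℝ`. -/
theorem student_t_loss_weakly_convex (ν b : ℝ) (hν : 0 < ν)
    (f : ℝ → ℝ) (hf : ∀ x, f x = Real.log (1 + (x - b) ^ 2 / ν)) :
    ContDiff ℝ 2 f ∧
    (∀ x, deriv (deriv f) x = 2 * (ν - (x - b) ^ 2) / (ν + (x - b) ^ 2) ^ 2) ∧
    IsGLB (Set.range fun x => deriv (deriv f) x) (-(1 / (4 * ν))) ∧
    (∀ x, deriv (deriv f) x = -(1 / (4 * ν)) ↔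
      (x = b + Real.sqrt (3 * ν) ∨ x = b - Real.sqrt (3 * ν))) ∧
    ConvexOn ℝ Set.univ (fun x => f x + x ^ 2 / (8 * ν)) := by
  have hfe : f = fun x => log (1 + (x - b) ^ 2 / ν) := funext hf
  have hf₁ : ∀ x, HasDerivAt f (2 * (x - b) / (ν + (x - b) ^ 2)) x :=
    fun x => hfe ▸ hasDerivAt_log_one_add_sq_sub_div hν b x
  have hf' : deriv f = fun x => 2 * (x - b) / (ν + (x - b) ^ 2) :=
    funext fun x => (hf₁ x).deriv
  have hf'' : ∀ x, deriv (deriv f) x = 2 * (ν - (x - b) ^ 2) / (ν + (x - b) ^ 2) ^ 2 :=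
    fun x => hf' ▸ (hasDerivAt_two_mul_sub_div_add_sq hν b x).deriv
  have hmin : ∀ x, deriv (deriv f) x = -(1 / (4 * ν)) ↔
      (x = b + √(3 * ν) ∨ x = b - √(3 * ν)) := fun x => by
    rw [hf'', two_mul_sub_div_add_sq_eq_neg_inv_iff hν]
    nth_rw 1 [← sq_sqrt (by positivity : 0 ≤ 3 * ν)]
    rw [sq_eq_sq_iff_eq_or_eq_neg, sub_eq_iff_eq_add', sub_eq_iff_eq_add', ← sub_eq_add_neg]
  refine ⟨?_, hf'', IsLeast.isGLB ⟨⟨b + √(3 * ν), (hmin _).2 (Or.inl rfl)⟩, ?_⟩, hmin, ?_⟩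
  · rw [hfe]
    exact contDiff_const.add (((contDiff_id.sub contDiff_const).pow 2).div_const ν) |>.log
      fun x => (by positivity : 0 < 1 + (x - b) ^ 2 / ν).ne'
  · rintro _ ⟨x, rfl⟩
    exact (hf'' x).ge.trans' (neg_inv_le_two_mul_sub_div_add_sq hν (x - b))
  · convert convexOn_univ_add_mul_sq_of_hasDerivAt2 hf₁ (hasDerivAt_two_mul_sub_div_add_sq hν b)
      (fun x => neg_inv_le_two_mul_sub_div_add_sq hν (x - b)) using 3 with x
    ring
end
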